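/- arXiv:1303.7429 — 6 statements merged into one kernel-verified Lean document; each statement's English description precedes it below -/
import Mathlib

section
/- If a relational structure A is weakly oligomorphic, then for every natural number n the age of A contains, up to isomorphism, only finitely many structures of cardinality n. -/
open FirstOrder FirstOrder.Language FirstOrder.Language.Structure CategoryTheory

universe u v w w' w'' w'''

/-- A first-order homomorphism is an embedding if it agrees pointwise with some embedding. -/
def IsHomEmbedding {L : FirstOrder.Language} {M N : Type*} [L.Structure M] [L.Structure N]
    (f : M →[L] N) : Prop :=
  ∃ e : M ↪[L] N, ∀ x, e x = f x

/-- A structure is weakly oligomorphic if for every arity `n` there are only finitely many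
relations on `n`-tuples invariant under all endomorphisms. -/
def WeaklyOligomorphic (L : FirstOrder.Language) (M : Type*) [L.Structure M] : Prop :=
  ∀ n : ℕ, {ρ : Set (Fin n → M) | ∀ f : M →[L] M, ∀ a ∈ ρ, f ∘ a ∈ ρ}.Finite

/-- A structure is homomorphism-homogeneous if every homomorphism from a finite substructure
into the structure extends to an endomorphism. -/
def HomHomogeneous (L : FirstOrder.Language) (M : Type*) [L.Structure M] : Prop :=
  ∀ S : L.Substructure M, (S : Set M).Finite →
    ∀ f : S →[L] M, ∃ g : M →[L] M, ∀ x : S, g (x : M) = f x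

/-- A structure is weakly homomorphism-homogeneous if for finite substructures `B ≤ C`, every
homomorphism from `B` into the structure extends to a homomorphism from `C`. -/
def WeaklyHomHomogeneous (L : FirstOrder.Language) (M : Type*) [L.Structure M] : Prop :=
  ∀ (B C : L.Substructure M) (h : B ≤ C), (C : Set M).Finite →
    ∀ f : B →[L] M, ∃ g : C →[L] M, ∀ x : B, g (Substructure.inclusion h x) = f x

/-- The age of a structure: the class of all finite structures embeddable into it. -/
def Age.{u₁, v₁, w₁, w₂} (L : FirstOrder.Language.{u₁, v₁}) (M : Type w₂) [L.Structure M] :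
    Set (Bundled.{w₁} L.Structure) :=
  {N | Finite N ∧ Nonempty (N ↪[L] M)}

/-- A class of structures projects onto another if every member of the first admits a
homomorphism to some member of the second. -/
def ProjectsOnto (L : FirstOrder.Language.{u, v}) (C D : Set (Bundled.{w} L.Structure)) : Prop :=
  ∀ A ∈ C, ∃ B ∈ D, Nonempty (A →[L] B)

/-- The hereditary property: a class is closed under (isomorphic copies of) substructures of
its members, i.e. closed under embeddability. -/
def HasHP (L : FirstOrder.Language.{u, v}) (C : Set (Bundled.{w} L.Structure)) : Prop :=
  ∀ A ∈ C, ∀ B : Bundled.{w} L.Structure, Nonempty (B ↪[L] A) → B ∈ C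

/-- The joint embedding property. -/
def HasJEP (L : FirstOrder.Language.{u, v}) (C : Set (Bundled.{w} L.Structure)) : Prop :=
  ∀ A ∈ C, ∀ B ∈ C, ∃ D ∈ C, Nonempty (A ↪[L] D) ∧ Nonempty (B ↪[L] D)

/-- The amalgamation property. -/
def HasAP (L : FirstOrder.Language.{u, v}) (C : Set (Bundled.{w} L.Structure)) : Prop :=
  ∀ A ∈ C, ∀ B₁ ∈ C, ∀ B₂ ∈ C, ∀ (f₁ : A ↪[L] B₁) (f₂ : A ↪[L] B₂),
    ∃ D ∈ C, ∃ (g₁ : B₁ ↪[L] D) (g₂ : B₂ ↪[L] D), ∀ a, g₁ (f₁ a) = g₂ (f₂ a)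

/-- The homo-amalgamation property: for every homomorphism `f₁ : A → B₁` and every embedding
`f₂ : A ↪ B₂` within the class there are `D` in the class, an embedding `g₁ : B₁ ↪ D` and a
homomorphism `g₂ : B₂ → D` with `g₁ ∘ f₁ = g₂ ∘ f₂`. -/
def HasHAP (L : FirstOrder.Language.{u, v}) (C : Set (Bundled.{w} L.Structure)) : Prop :=
  ∀ A ∈ C, ∀ B₁ ∈ C, ∀ B₂ ∈ C, ∀ (f₁ : A →[L] B₁) (f₂ : A ↪[L] B₂),
    ∃ D ∈ C, ∃ (g₁ : B₁ ↪[L] D) (g₂ : B₂ →[L] D), ∀ a, g₁ (f₁ a) = g₂ (f₂ a)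

/-- Closure under isomorphism. -/
def IsoClosed (L : FirstOrder.Language.{u, v}) (C : Set (Bundled.{w} L.Structure)) : Prop :=
  ∀ A ∈ C, ∀ B : Bundled.{w} L.Structure, Nonempty (A ≃[L] B) → B ∈ C

/-- A structure is hom-irreducible in a class if every homomorphism from it to a member of
the class is an embedding. -/
def HomIrreducibleIn (L : FirstOrder.Language.{u, v}) (C : Set (Bundled.{w} L.Structure))
    (A : Type*) [L.Structure A] : Prop :=
  ∀ B ∈ C, ∀ f : A →[L] B, IsHomEmbedding f

/-- `CA L M` is the class of all finite structures in the age of `M` that are hom-irreducible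
in the age of `M`. -/
def CA.{u₁, v₁, w₁, w₂} (L : FirstOrder.Language.{u₁, v₁}) (M : Type w₂) [L.Structure M] :
    Set (Bundled.{w₁} L.Structure) :=
  {B | B ∈ Age.{u₁, v₁, w₁, w₂} L M ∧
    HomIrreducibleIn.{u₁, v₁, w₁, w₁} L (Age.{u₁, v₁, w₁, w₂} L M) B}

/-- `M ⪯_h N` : the age of `N` is contained in the age of `M`, and for all finite
substructures `A ≤ B` of `M`, every homomorphism from `A` to `N` extends to `B`. -/
def PrecH.{u₁, v₁, w₁, w₂, w₃} (L : FirstOrder.Language.{u₁, v₁}) (M : Type w₂) (N : Type w₃)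
    [L.Structure M] [L.Structure N] : Prop :=
  Age.{u₁, v₁, w₁, w₃} L N ⊆ Age.{u₁, v₁, w₁, w₂} L M ∧
  ∀ (A B : L.Substructure M) (h : A ≤ B), (B : Set M).Finite →
    ∀ f : A →[L] N, ∃ g : B →[L] N, ∀ x : A, g (Substructure.inclusion h x) = f x

/-- A structure is (ultra)homogeneous if every isomorphism between finite substructures
(i.e. every embedding of a finite substructure into the structure) extends to an
automorphism. -/
def Ultrahomogeneous (L : FirstOrder.Language) (M : Type*) [L.Structure M] : Prop :=
  ∀ S : L.Substructure M, (S : Set M).Finite →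
    ∀ f : S ↪[L] M, ∃ g : M ≃[L] M, ∀ x : S, g (x : M) = f x

/-- A structure is oligomorphic if for every `n` its automorphism group has finitely many
orbits on `n`-tuples. -/
def Oligomorphic (L : FirstOrder.Language) (M : Type*) [L.Structure M] : Prop :=
  ∀ n : ℕ, ∃ S : Set (Fin n → M), S.Finite ∧
    ∀ a : Fin n → M, ∃ b ∈ S, ∃ g : M ≃[L] M, (fun i => g (b i)) = a

/-- A structure is a core if every endomorphism is an embedding. -/
def IsCore (L : FirstOrder.Language) (M : Type*) [L.Structure M] : Prop :=
  ∀ f : M →[L] M, IsHomEmbedding f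

/-- A substructure `C` is a core of `M` if `C` is a core and some endomorphism of `M` has
image contained in `C`. -/
def IsCoreOf (L : FirstOrder.Language) (M : Type*) [L.Structure M]
    (C : L.Substructure M) : Prop :=
  IsCore L C ∧ ∃ f : M →[L] M, ∀ x, f x ∈ C

/-- The constraint satisfaction problem of `M`: the class of all finite structures admitting
a homomorphism to `M`. -/
def CSP.{u₁, v₁, w₁, w₂} (L : FirstOrder.Language.{u₁, v₁}) (M : Type w₂) [L.Structure M] :
    Set (Bundled.{w₁} L.Structure) :=
  {C | Finite C ∧ Nonempty (C →[L] M)}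

/-- `f` is an `n`-ary polymorphism of `M`, i.e. a homomorphism from the `n`-th direct power
of `M` to `M`. -/
def IsPolymorphism (L : FirstOrder.Language) {M : Type*} [L.Structure M] {n : ℕ}
    (f : (Fin n → M) → M) : Prop :=
  ∀ {m : ℕ} (R : L.Relations m) (x : Fin n → Fin m → M),
    (∀ j, RelMap R (x j)) → RelMap R (fun i => f (fun j => x j i))

section AuxStmt12

variable {L : FirstOrder.Language.{u, v}} [L.IsRelational] {M : Type w'} [L.Structure M] {n : ℕ}

/-- The structure on `ULift (Fin n)` induced by a tuple. -/
def tupStr (a : Fin n → M) : L.Structure (ULift.{w} (Fin n)) where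
  funMap := fun f _ => isEmptyElim f
  RelMap := fun R x => RelMap R (fun i => a (x i).down)

/-- The bundled structure induced by a tuple. -/
def StrB (a : Fin n → M) : Bundled.{w} L.Structure :=
  ⟨ULift.{w} (Fin n), tupStr a⟩

/-- The positive atomic closure of a tuple. -/
def Psi (L : FirstOrder.Language.{u, v}) [L.Structure M] (a : Fin n → M) : Set (Fin n → M) :=
  {c | ∀ (m : ℕ) (R : L.Relations m) (σ : Fin m → Fin n), RelMap R (a ∘ σ) → RelMap R (c ∘ σ)}

theorem psi_invariant (a : Fin n → M) :
    ∀ f : M →[L] M, ∀ c ∈ Psi L a, f ∘ c ∈ Psi L a := by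
  intro f c hc m R σ hR
  have := hc m R σ hR
  have h2 := f.map_rel R (c ∘ σ) this
  convert h2 using 2
  rfl

theorem self_mem_psi (a : Fin n → M) : a ∈ Psi L a := fun _ _ _ h => h

theorem psi_eq_iff {a b : Fin n → M} (h : Psi L a = Psi L b) (m : ℕ) (R : L.Relations m)
    (σ : Fin m → Fin n) : RelMap R (a ∘ σ) ↔ RelMap R (b ∘ σ) := by
  constructor
  · intro hR
    exact (h ▸ self_mem_psi (L := L) b : b ∈ Psi L a) m R σ hR
  · intro hR
    exact (h ▸ self_mem_psi (L := L) a : a ∈ Psi L b) m R σ hR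

theorem strB_eq {a b : Fin n → M} (h : Psi L a = Psi L b) :
    (StrB a : Bundled.{w} L.Structure) = StrB b := by
  have hR : ∀ (m : ℕ) (R : L.Relations m) (x : Fin m → ULift.{w} (Fin n)),
      RelMap R (fun i => a (x i).down) = RelMap R (fun i => b (x i).down) := by
    intro m R x
    exact propext (psi_eq_iff h m R fun i => (x i).down)
  unfold StrB tupStr
  congr 1
  congr 1
  funext m R x
  exact hR m R x

end AuxStmt12

/-- If a relational structure is weakly oligomorphic, then for every `n` its age
contains, up to isomorphism, only finitely many structures of cardinality `n`. -/
theorem stmt12 (L : FirstOrder.Language.{u, v}) [L.IsRelational]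
    (M : Type w') [L.Structure M]
    (hwo : WeaklyOligomorphic L M) (n : ℕ) :
    ∃ S : Set (Bundled.{w} L.Structure), S.Finite ∧
      ∀ B ∈ Age.{u, v, w, w'} L M, Nat.card B = n → ∃ C ∈ S, Nonempty (B ≃[L] C) := by
  classical
  have hfin := hwo n
  let s : Set (Fin n → M) → Bundled.{w} L.Structure := fun ρ =>
    if h : ∃ a : Fin n → M, Psi L a = ρ then (StrB h.choose : Bundled.{w} L.Structure)
    else Bundled.mk (ULift.{w} (Fin n))
      ⟨fun f _ => isEmptyElim f, fun _ _ => False⟩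
  refine ⟨{C : Bundled.{w} L.Structure | ∃ a : Fin n → M, C = StrB a}, ?_, ?_⟩
  · apply Set.Finite.of_surjOn s _ hfin
    rintro C ⟨a, rfl⟩
    refine ⟨Psi L a, psi_invariant a, ?_⟩
    have hex : ∃ b : Fin n → M, Psi L b = Psi L a := ⟨a, rfl⟩
    simp only [s, dif_pos hex]
    exact strB_eq hex.choose_spec
  · rintro B ⟨hBfin, ⟨e⟩⟩ hcard
    have : Finite B := hBfin
    let j : B ≃ Fin n := Finite.equivFinOfCardEq hcard
    let a : Fin n → M := fun i => e (j.symm i)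
    refine ⟨StrB a, ⟨a, rfl⟩, ⟨?_⟩⟩
    refine ⟨j.trans Equiv.ulift.{w, 0}.symm, ?_, ?_⟩
    · intro m f x
      exact isEmptyElim f
    · intro m R x
      have hax : (fun i => a (((j.trans Equiv.ulift.{w, 0}.symm) (x i)).down)) = e ∘ x := by
        funext i
        simp [a, j]
      show RelMap R (fun i => a (((j.trans Equiv.ulift.{w, 0}.symm) (x i)).down)) ↔ RelMap R x
      rw [hax]
      exact e.map_rel R x
end

section
/- Let C be a relational structure that is homogeneous (ultrahomogeneous) and a core. Then C is weakly oligomorphic if and only if C is oligomorphic. -/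
open FirstOrder FirstOrder.Language FirstOrder.Language.Structure CategoryTheory

universe u v w w' w'' w'''

/-- Key lemma: in an ultrahomogeneous core, every endomorphism agrees with some automorphism
on any finite tuple. -/
private lemma extend_endo {L : FirstOrder.Language.{u, v}} [L.IsRelational] {M : Type w'}
    [L.Structure M] (hu : Ultrahomogeneous L M) (hc : IsCore L M) (f : M →[L] M) {n : ℕ}
    (a : Fin n → M) : ∃ g : M ≃[L] M, ∀ i, g (a i) = f (a i) := by
  obtain ⟨e, he⟩ := hc f
  let S : L.Substructure M :=
    { carrier := Set.range a
      fun_mem := fun {m} F _ _ => isEmptyElim F }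
  have hfin : (S : Set M).Finite := Set.finite_range a
  obtain ⟨g, hg⟩ := hu S hfin (e.comp S.subtype)
  refine ⟨g, fun i => ?_⟩
  have := hg ⟨a i, ⟨i, rfl⟩⟩
  simpa [he] using this

/-- A homogeneous (ultrahomogeneous) core is weakly oligomorphic if and only if
it is oligomorphic. -/
theorem stmt14 (L : FirstOrder.Language.{u, v}) [L.IsRelational]
    (M : Type w') [L.Structure M]
    (hu : Ultrahomogeneous L M) (hc : IsCore L M) :
    WeaklyOligomorphic L M ↔ Oligomorphic L M := by
  classical
  constructor
  · intro hw n
    set orb : (Fin n → M) → Set (Fin n → M) := fun a => {c | ∃ f : M →[L] M, ⇑f ∘ a = c}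
      with horb_def
    have horb : ∀ a, orb a ∈ {ρ : Set (Fin n → M) | ∀ f : M →[L] M, ∀ x ∈ ρ, ⇑f ∘ x ∈ ρ} := by
      intro a h hx hmem
      obtain ⟨f, hf⟩ := hmem
      exact ⟨h.comp f, by rw [← hf]; rfl⟩
    have hT : (Set.range orb).Finite :=
      (hw n).subset (Set.range_subset_iff.mpr horb)
    haveI := hT.to_subtype
    have h1 : ∀ ρ : Set.range orb, ∃ b, orb b = (ρ : Set (Fin n → M)) := fun ρ => ρ.2
    choose rep hrep using h1
    refine ⟨Set.range rep, Set.finite_range rep, ?_⟩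
    intro a
    refine ⟨rep ⟨orb a, a, rfl⟩, ⟨_, rfl⟩, ?_⟩
    have hb : orb (rep ⟨orb a, a, rfl⟩) = orb a := hrep _
    have ha : a ∈ orb (rep ⟨orb a, a, rfl⟩) := by
      rw [hb]; exact ⟨Hom.id L M, by funext i; rfl⟩
    obtain ⟨f, hf⟩ := ha
    obtain ⟨g, hg⟩ := extend_endo hu hc f (rep ⟨orb a, a, rfl⟩)
    exact ⟨g, funext fun i => by rw [hg i]; exact congrFun hf i⟩
  · intro holig n
    obtain ⟨S, hSfin, hS⟩ := holig n
    have key : ∀ ρ₁ ∈ {ρ : Set (Fin n → M) | ∀ f : M →[L] M, ∀ a ∈ ρ, ⇑f ∘ a ∈ ρ},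
        ∀ ρ₂ ∈ {ρ : Set (Fin n → M) | ∀ f : M →[L] M, ∀ a ∈ ρ, ⇑f ∘ a ∈ ρ},
        ρ₁ ∩ S = ρ₂ ∩ S → ρ₁ ⊆ ρ₂ := by
      intro ρ₁ h₁ ρ₂ h₂ heq a ha
      obtain ⟨b, hbS, g, hg⟩ := hS a
      have hb1 : b ∈ ρ₁ := by
        have := h₁ g.symm.toEmbedding.toHom a ha
        have hba : ⇑g.symm.toEmbedding.toHom ∘ a = b := by
          funext i
          have : a i = g (b i) := (congrFun hg i).symm
          simp [this]
        rwa [hba] at this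
      have hb2 : b ∈ ρ₂ := by
        have : b ∈ ρ₂ ∩ S := heq ▸ ⟨hb1, hbS⟩
        exact this.1
      have := h₂ g.toEmbedding.toHom b hb2
      have hga : ⇑g.toEmbedding.toHom ∘ b = a := by
        funext i; exact congrFun hg i
      rwa [hga] at this
    have hinj : Set.InjOn (fun ρ => ρ ∩ S)
        {ρ : Set (Fin n → M) | ∀ f : M →[L] M, ∀ a ∈ ρ, ⇑f ∘ a ∈ ρ} := by
      intro ρ₁ h₁ ρ₂ h₂ heq
      exact le_antisymm (key ρ₁ h₁ ρ₂ h₂ heq) (key ρ₂ h₂ ρ₁ h₁ heq.symm)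
    refine Set.Finite.of_finite_image ?_ hinj
    refine hSfin.finite_subsets.subset ?_
    rintro t ⟨ρ, -, rfl⟩
    exact Set.inter_subset_right
end

section
/- Let A be a countable weakly oligomorphic homomorphism-homogeneous relational structure. Then A has a core F such that F is homogeneous (ultrahomogeneous), oligomorphic, and Age(F) = C_A (i.e. F is isomorphic to the Fraïssé limit of C_A). -/
open FirstOrder FirstOrder.Language FirstOrder.Language.Structure CategoryTheory

universe u v w w' w'' w'''

set_option linter.unusedSectionVars false
set_option linter.unusedVariables false
set_option maxHeartbeats 1000000

namespace Stmt15
open Function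

variable {L : FirstOrder.Language.{u, v}} {M : Type w'} [L.Structure M] [L.IsRelational]


def orb (L : FirstOrder.Language.{u, v}) {M : Type w'} [L.Structure M] {n : ℕ}
    (a : Fin n → M) : Set (Fin n → M) :=
  {b | ∃ g : M →[L] M, ∀ i, g (a i) = b i}

def Min (L : FirstOrder.Language.{u, v}) {M : Type w'} [L.Structure M] {n : ℕ}
    (a : Fin n → M) : Prop :=
  ∀ f : M →[L] M, ∃ g : M →[L] M, ∀ i, g (f (a i)) = a i

theorem orb_self {n : ℕ} (a : Fin n → M) : a ∈ orb L a := ⟨Hom.id L M, fun _ => rfl⟩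

theorem orb_trans {n : ℕ} {a b c : Fin n → M} (hb : b ∈ orb L a) (hc : c ∈ orb L b) :
    c ∈ orb L a := by
  obtain ⟨g, hg⟩ := hb; obtain ⟨g', hg'⟩ := hc
  exact ⟨g'.comp g, fun i => by simp [Hom.comp_apply, hg, hg']⟩

theorem orb_mono {n : ℕ} {a b : Fin n → M} (hb : b ∈ orb L a) : orb L b ⊆ orb L a :=
  fun _ hc => orb_trans hb hc

theorem orb_invariant {n : ℕ} (a : Fin n → M) :
    ∀ f : M →[L] M, ∀ b ∈ orb L a, f ∘ b ∈ orb L a := by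
  rintro f b ⟨g, hg⟩
  exact ⟨f.comp g, fun i => by simp [Hom.comp_apply, hg]⟩

theorem Min.comp {n m : ℕ} {a : Fin n → M} (ha : Min L a) (σ : Fin m → Fin n) :
    Min L (a ∘ σ) := fun f => by
  obtain ⟨g, hg⟩ := ha f
  exact ⟨g, fun i => hg (σ i)⟩

theorem Min.image {n : ℕ} {a : Fin n → M} (ha : Min L a) (e : M →[L] M) :
    Min L (fun i => e (a i)) := fun f => by
  obtain ⟨g, hg⟩ := ha (f.comp e)
  exact ⟨e.comp g, fun i => by
    have := congrArg e (hg i)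
    simpa [Hom.comp_apply] using this⟩

theorem Min.mutual {n : ℕ} {a b : Fin n → M} (ha : Min L a) (hb : b ∈ orb L a) :
    a ∈ orb L b := by
  obtain ⟨g, hg⟩ := hb
  obtain ⟨g', hg'⟩ := ha g
  exact ⟨g', fun i => by rw [← hg i]; exact hg' i⟩

theorem exists_min_orb (hwo : WeaklyOligomorphic L M) {n : ℕ} (a : Fin n → M) :
    ∃ b ∈ orb L a, Min L b := by
  have himg : ((orb L) '' (orb L a)).Finite :=
    (hwo n).subset (by rintro ρ ⟨c, _, rfl⟩; exact orb_invariant c)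
  obtain ⟨b, hb, hmin⟩ := Set.Finite.exists_minimalFor' (orb L) (orb L a) himg ⟨a, orb_self a⟩
  refine ⟨b, hb, fun f => ?_⟩
  have h1 : (f ∘ b) ∈ orb L b := ⟨f, fun _ => rfl⟩
  have h2 : (f ∘ b) ∈ orb L a := orb_mono hb h1
  have h3 : orb L (f ∘ b) ≤ orb L b := orb_mono h1
  have heq := (le_antisymm h3 (hmin h2 h3)).symm
  have hbmem : b ∈ orb L (f ∘ b) := heq ▸ orb_self b
  obtain ⟨g, hg⟩ := hbmem
  exact ⟨g, fun i => hg i⟩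

theorem extend_hom (hhh : HomHomogeneous L M) {n : ℕ} (a b : Fin n → M)
    (wd : ∀ i j, a i = a j → b i = b j)
    (rel : ∀ (m : ℕ) (R : L.Relations m) (σ : Fin m → Fin n),
      RelMap R (a ∘ σ) → RelMap R (b ∘ σ)) :
    ∃ e : M →[L] M, ∀ i, e (a i) = b i := by
  classical
  let S : L.Substructure M := { carrier := Set.range a, fun_mem := fun {m} F => isEmptyElim F }
  have hfin : (S : Set M).Finite := Set.finite_range a
  have hidx : ∀ x : S, ∃ i, a i = (x : M) := fun x => x.2
  choose idx hidx' using hidx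
  let f : S →[L] M :=
    { toFun := fun x => b (idx x)
      map_fun' := fun {m} F => isEmptyElim F
      map_rel' := by
        intro m R x h
        have h' : RelMap R (fun i => ((x i : M))) := h
        have hx : (fun i => ((x i : M))) = a ∘ (fun i => idx (x i)) := by
          funext i; exact (hidx' (x i)).symm
        rw [hx] at h'
        exact rel m R _ h' }
  obtain ⟨e, he⟩ := hhh S hfin f
  refine ⟨e, fun i => ?_⟩
  have hmem : a i ∈ S := ⟨i, rfl⟩
  have h2 : f ⟨a i, hmem⟩ = b (idx ⟨a i, hmem⟩) := rfl
  rw [he ⟨a i, hmem⟩, h2]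
  exact wd _ _ (hidx' ⟨a i, hmem⟩)



/-- list as tuple -/
def tup (l : List M) : Fin l.length → M := fun i => l.get i

theorem mem_tup {l : List M} {x : M} : x ∈ l ↔ ∃ i, tup l i = x := List.mem_iff_get

theorem tup_append (l : List M) (y : M) :
    tup (l ++ [y]) = Fin.snoc (tup l) y ∘ Fin.cast (by simp) := by
  have hlen : (l ++ [y]).length = l.length + 1 := by simp
  funext i
  simp only [Function.comp_apply]
  rcases i with ⟨i, hi⟩
  by_cases h : i < l.length
  · have h2 : Fin.cast hlen ⟨i, hi⟩ = Fin.castSucc ⟨i, h⟩ := rfl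
    rw [h2, Fin.snoc_castSucc]
    show (l ++ [y]).get ⟨i, hi⟩ = l.get ⟨i, h⟩
    simp [List.getElem_append, h]
  · have h3 : i = l.length := by simp at hi; omega
    have h2 : Fin.cast hlen ⟨i, hi⟩ = Fin.last l.length := by
      apply Fin.ext; simp [h3]
    rw [h2, Fin.snoc_last]
    show (l ++ [y]).get ⟨i, hi⟩ = y
    simp [List.getElem_append, h3]

theorem step (hwo : WeaklyOligomorphic L M) {l : List M} (hl : Min L (tup l)) (z : M) :
    ∃ y : M, Min L (tup (l ++ [y])) ∧
      ∃ g : M →[L] M, (∀ w ∈ l, g w = w) ∧ g z = y := by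
  obtain ⟨b, ⟨v, hv⟩, hbmin⟩ := exists_min_orb hwo (Fin.snoc (tup l) z)
  obtain ⟨r, hr⟩ := hl v
  refine ⟨r (v z), ?_, r.comp v, fun w hw => ?_, rfl⟩
  · have h1 : Min L (fun i => r (b i)) := hbmin.image r
    have h2 : (fun i => r (b i)) = Fin.snoc (tup l) (r (v z)) := by
      funext i
      rw [← hv i]
      refine Fin.lastCases ?_ ?_ i
      · simp [Fin.snoc_last]
      · intro j; simp only [Fin.snoc_castSucc]; exact hr j
    rw [h2] at h1
    rw [tup_append]
    exact h1.comp _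
  · obtain ⟨i, rfl⟩ := mem_tup.1 hw
    have := hr i
    simpa using this

variable (L) in
noncomputable def chain (hwo : WeaklyOligomorphic L M) (enc : M → ℕ) :
    ℕ → {l : List M // Min L (tup l)}
  | 0 => ⟨[], fun _ => ⟨Hom.id L M, fun i => i.elim0⟩⟩
  | (k+1) =>
      match Function.partialInv enc (Nat.unpair k).1 with
      | none => chain hwo enc k
      | some z => ⟨(chain hwo enc k).1 ++ [Classical.choose (step hwo (chain hwo enc k).2 z)],
          (Classical.choose_spec (step hwo (chain hwo enc k).2 z)).1⟩

variable (hwo : WeaklyOligomorphic L M) (enc : M → ℕ)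

theorem chain_prefix_succ (k : ℕ) :
    ((chain L hwo enc k).1) <+: ((chain L hwo enc (k+1)).1) := by
  show (chain L hwo enc k).1 <+: ((chain L hwo enc (k+1) : {l : List M // Min L (tup l)})).1
  rw [chain]
  rcases h : Function.partialInv enc (Nat.unpair k).1 with _ | z
  · simp
  · simp [List.prefix_append]

theorem chain_prefix {k k' : ℕ} (h : k ≤ k') :
    ((chain L hwo enc k).1) <+: ((chain L hwo enc k').1) := by
  induction k' with
  | zero => cases Nat.le_zero.1 h; exact List.prefix_rfl
  | succ n ih =>
      rcases Nat.lt_or_ge k (n+1) with h' | h'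
      · exact (ih (by omega)).trans (chain_prefix_succ hwo enc n)
      · have : k = n + 1 := by omega
        subst this; exact List.prefix_rfl

variable (L M) in
def Fcar (hwo : WeaklyOligomorphic L M) (enc : M → ℕ) : Set M :=
  {x | ∃ k, x ∈ (chain L hwo enc k).1}

theorem exists_stage (s : Finset M) (hs : ↑s ⊆ Fcar L M hwo enc) :
    ∃ k, ∀ x ∈ s, x ∈ (chain L hwo enc k).1 := by
  classical
  induction s using Finset.induction with
  | empty => exact ⟨0, by simp⟩
  | @insert x s hx ih =>
      obtain ⟨k₁, hk₁⟩ := ih (by intro y hy; exact hs (by simp [hy]))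
      obtain ⟨k₂, hk₂⟩ := hs (by simp : x ∈ ↑(insert x s))
      refine ⟨max k₁ k₂, ?_⟩
      intro y hy
      rcases Finset.mem_insert.1 hy with rfl | hy
      · exact (chain_prefix hwo enc (le_max_right k₁ k₂)).subset hk₂
      · exact (chain_prefix hwo enc (le_max_left k₁ k₂)).subset (hk₁ y hy)

theorem minF_all {n : ℕ} (t : Fin n → M) (ht : ∀ i, t i ∈ Fcar L M hwo enc) : Min L t := by
  classical
  obtain ⟨k, hk⟩ := exists_stage hwo enc (Finset.image t Finset.univ)
    (by intro x hx; simp only [Finset.coe_image] at hx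
        obtain ⟨i, _, rfl⟩ := hx; exact ht i)
  have h : ∀ i, ∃ j, tup (chain L hwo enc k).1 j = t i := by
    intro i
    exact mem_tup.1 (hk (t i) (by simp))
  choose σ hσ using h
  have : t = tup (chain L hwo enc k).1 ∘ σ := by funext i; exact (hσ i).symm
  rw [this]
  exact (chain L hwo enc k).2.comp σ

theorem rich_all (henc : Function.Injective enc) (s : Finset M) (hs : ↑s ⊆ Fcar L M hwo enc) (z : M) :
    ∃ y ∈ Fcar L M hwo enc, ∃ g : M →[L] M, (∀ w ∈ s, g w = w) ∧ g z = y := by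
  obtain ⟨k₀, hk₀⟩ := exists_stage hwo enc s hs
  set k := Nat.pair (enc z) k₀ with hk
  have hz : Function.partialInv enc (Nat.unpair k).1 = some z := by
    rw [hk, Nat.unpair_pair]; exact Function.partialInv_left henc z
  have hkk : k₀ ≤ k := Nat.right_le_pair _ _
  set y := Classical.choose (step hwo (chain L hwo enc k).2 z) with hy
  obtain ⟨-, g, hg, hgz⟩ := Classical.choose_spec (step hwo (chain L hwo enc k).2 z)
  have hchain : (chain L hwo enc (k+1)).1 = (chain L hwo enc k).1 ++ [y] := by
    show ((chain L hwo enc (k+1) : {l : List M // Min L (tup l)})).1 = _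
    rw [chain, hz]
  refine ⟨y, ⟨k+1, by rw [hchain]; simp⟩, g, fun w hw => ?_, hgz⟩
  exact hg w ((chain_prefix hwo enc hkk).subset (hk₀ w hw))



variable (F : L.Substructure M)

def IsoList (p : List (↥F × ↥F)) : Prop :=
  (∃ e₁ : M →[L] M, ∀ q ∈ p, e₁ (q.1 : M) = (q.2 : M)) ∧
  (∃ e₂ : M →[L] M, ∀ q ∈ p, e₂ (q.2 : M) = (q.1 : M))

theorem isoList_swap {p : List (↥F × ↥F)} (h : IsoList F p) :
    IsoList F (p.map Prod.swap) := by
  obtain ⟨⟨e₁, h₁⟩, ⟨e₂, h₂⟩⟩ := h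
  constructor
  · exact ⟨e₂, by rintro q hq; obtain ⟨q', hq', rfl⟩ := List.mem_map.1 hq; exact h₂ q' hq'⟩
  · exact ⟨e₁, by rintro q hq; obtain ⟨q', hq', rfl⟩ := List.mem_map.1 hq; exact h₁ q' hq'⟩

variable (rich : ∀ (s : Finset M), ↑s ⊆ (F : Set M) → ∀ z : M,
    ∃ y ∈ (F : Set M), ∃ g : M →[L] M, (∀ w ∈ s, g w = w) ∧ g z = y)
variable (minF : ∀ {n : ℕ} (t : Fin n → M), (∀ i, t i ∈ (F : Set M)) → Min L t)

include rich minF in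
theorem fwd_step {p : List (↥F × ↥F)} (h : IsoList F p) (z : ↥F) :
    ∃ w : ↥F, IsoList F (p ++ [(z, w)]) := by
  classical
  obtain ⟨⟨e₁, h₁⟩, ⟨e₂, h₂⟩⟩ := h
  obtain ⟨y, hyF, g, hg, hgz⟩ := rich (p.map (fun q => ((q.2 : M)))).toFinset
    (by intro x hx
        simp only [List.coe_toFinset, Set.mem_setOf_eq, List.mem_map] at hx
        obtain ⟨q, _, rfl⟩ := hx
        exact q.2.2) (e₁ (z : M))
  set w : ↥F := ⟨y, hyF⟩ with hwdef
  have he₁' : ∀ q ∈ p ++ [(z, w)], (g.comp e₁) ((q.1 : M)) = (q.2 : M) := by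
    intro q hq
    rcases List.mem_append.1 hq with hq | hq
    · have hfix : g ((q.2 : M)) = (q.2 : M) := hg _ (by
        simp only [List.mem_toFinset, List.mem_map]; exact ⟨q, hq, rfl⟩)
      simp only [Hom.comp_apply, h₁ q hq]; exact hfix
    · simp only [List.mem_singleton] at hq; subst hq
      simpa [Hom.comp_apply] using hgz
  refine ⟨w, ⟨g.comp e₁, he₁'⟩, ?_⟩
  set lT : List M := p.map (fun q => ((q.1 : M))) ++ [(z : M)] with hlT
  have hTF : ∀ x ∈ lT, x ∈ (F : Set M) := by
    intro x hx
    rcases List.mem_append.1 hx with hx | hx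
    · obtain ⟨q, _, rfl⟩ := List.mem_map.1 hx; exact q.1.2
    · simp only [List.mem_singleton] at hx; subst hx; exact z.2
  have hmin : Min L (fun i : Fin lT.length => lT.get i) :=
    minF _ (fun i => hTF _ (by exact List.get_mem lT i))
  obtain ⟨u, hu⟩ := hmin (g.comp e₁)
  refine ⟨u, ?_⟩
  intro q hq
  rcases List.mem_append.1 hq with hq | hq
  · have hx : (q.1 : M) ∈ lT := List.mem_append.2 (Or.inl (List.mem_map.2 ⟨q, hq, rfl⟩))
    obtain ⟨i, hi⟩ := List.mem_iff_get.1 hx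
    have h3 : u ((g.comp e₁) (lT.get i)) = lT.get i := hu i
    rw [hi] at h3
    rw [← he₁' q (List.mem_append.2 (Or.inl hq))]
    exact h3
  · simp only [List.mem_singleton] at hq; subst hq
    have hx : (z : M) ∈ lT := List.mem_append.2 (Or.inr (by simp))
    obtain ⟨i, hi⟩ := List.mem_iff_get.1 hx
    have h3 : u ((g.comp e₁) (lT.get i)) = lT.get i := hu i
    rw [hi] at h3
    have hww : ((w : M)) = (g.comp e₁) ((z : M)) := by simp [Hom.comp_apply]; exact hgz.symm
    show u ((w : M)) = (z : M)
    rw [hww]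
    exact h3

include rich minF in
theorem bwd_step {p : List (↥F × ↥F)} (h : IsoList F p) (z : ↥F) :
    ∃ w : ↥F, IsoList F (p ++ [(w, z)]) := by
  obtain ⟨w, hw⟩ := fwd_step F rich minF (isoList_swap F h) z
  refine ⟨w, ?_⟩
  have h2 := isoList_swap F hw
  have he : (p.map Prod.swap ++ [(z, w)]).map Prod.swap = p ++ [(w, z)] := by
    simp [List.map_map]
  rw [he] at h2
  exact h2

include rich minF in
theorem step3 {p : List (↥F × ↥F)} (h : IsoList F p) (z : ↥F) :
    ∃ w w' : ↥F, IsoList F (p ++ [(z, w), (w', z)]) := by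
  obtain ⟨w, hw⟩ := fwd_step F rich minF h z
  obtain ⟨w', hw'⟩ := bwd_step F rich minF hw z
  refine ⟨w, w', ?_⟩
  have he : p ++ [(z, w), (w', z)] = (p ++ [(z, w)]) ++ [(w', z)] := by simp
  rw [he]
  exact hw'

variable (encF : ↥F → ℕ) (hencF : Function.Injective encF)

noncomputable def bchain (p₀ : {p : List (↥F × ↥F) // IsoList F p}) :
    ℕ → {p : List (↥F × ↥F) // IsoList F p}
  | 0 => p₀
  | (k+1) =>
      match Function.partialInv encF k with
      | none => bchain p₀ k
      | some z =>
          ⟨(bchain p₀ k).1 ++ [(z, Classical.choose (step3 F rich minF (bchain p₀ k).2 z)),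
              (Classical.choose (Classical.choose_spec (step3 F rich minF (bchain p₀ k).2 z)), z)],
            Classical.choose_spec (Classical.choose_spec (step3 F rich minF (bchain p₀ k).2 z))⟩

variable (p₀ : {p : List (↥F × ↥F) // IsoList F p})

noncomputable def Gv (z : ↥F) : ↥F :=
  Classical.choose (step3 F rich minF (bchain F rich minF encF p₀ (encF z)).2 z)

noncomputable def Hv (z : ↥F) : ↥F :=
  Classical.choose (Classical.choose_spec (step3 F rich minF (bchain F rich minF encF p₀ (encF z)).2 z))

theorem bchain_prefix_succ (k : ℕ) :
    (bchain F rich minF encF p₀ k).1 <+: (bchain F rich minF encF p₀ (k+1)).1 := by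
  show (bchain F rich minF encF p₀ k).1 <+:
    ((bchain F rich minF encF p₀ (k+1) : {p : List (↥F × ↥F) // IsoList F p})).1
  rw [bchain]
  rcases h : Function.partialInv encF k with _ | z
  · simp
  · simp [List.prefix_append]

theorem bchain_prefix {k k' : ℕ} (h : k ≤ k') :
    (bchain F rich minF encF p₀ k).1 <+: (bchain F rich minF encF p₀ k').1 := by
  induction k' with
  | zero => cases Nat.le_zero.1 h; exact List.prefix_rfl
  | succ n ih =>
      rcases Nat.lt_or_ge k (n+1) with h' | h'
      · exact (ih (by omega)).trans (bchain_prefix_succ F rich minF encF p₀ n)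
      · have : k = n + 1 := by omega
        subst this; exact List.prefix_rfl

include hencF in
theorem bchain_mem (z : ↥F) {k : ℕ} (h : encF z < k) :
    (z, Gv F rich minF encF p₀ z) ∈ (bchain F rich minF encF p₀ k).1 ∧
    (Hv F rich minF encF p₀ z, z) ∈ (bchain F rich minF encF p₀ k).1 := by
  have hsome : Function.partialInv encF (encF z) = some z := Function.partialInv_left hencF z
  have hstage : (bchain F rich minF encF p₀ (encF z + 1)).1 =
      (bchain F rich minF encF p₀ (encF z)).1 ++
        [(z, Gv F rich minF encF p₀ z), (Hv F rich minF encF p₀ z, z)] := by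
    show ((bchain F rich minF encF p₀ (encF z + 1) : {p : List (↥F × ↥F) // IsoList F p})).1 = _
    rw [bchain, hsome]
    rfl
  have hsub := (bchain_prefix F rich minF encF p₀ (show encF z + 1 ≤ k by omega)).subset
  constructor
  · exact hsub (by rw [hstage]; simp)
  · exact hsub (by rw [hstage]; simp)


include rich minF hencF in
theorem bnf : ∃ G : ↥F ≃[L] ↥F, ∀ q ∈ p₀.1, G q.1 = q.2 := by
  classical
  have hcommon : ∀ {m : ℕ} (x : Fin m → ℕ), ∃ k, ∀ i, x i < k := by
    intro m x
    refine ⟨(Finset.univ.sup x) + 1, fun i => ?_⟩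
    have := Finset.le_sup (f := x) (Finset.mem_univ i)
    omega
  set G := Gv F rich minF encF p₀ with hG
  set H := Hv F rich minF encF p₀ with hH
  have memG : ∀ (z : ↥F) {k : ℕ}, encF z < k →
      (z, G z) ∈ (bchain F rich minF encF p₀ k).1 :=
    fun z {k} h => (bchain_mem F rich minF encF hencF p₀ z h).1
  have memH : ∀ (z : ↥F) {k : ℕ}, encF z < k →
      (H z, z) ∈ (bchain F rich minF encF p₀ k).1 :=
    fun z {k} h => (bchain_mem F rich minF encF hencF p₀ z h).2
  have hGH : ∀ z, H (G z) = z := by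
    intro z
    set k := max (encF z) (encF (G z)) + 1
    obtain ⟨⟨e₁, h₁⟩, ⟨e₂, h₂⟩⟩ := (bchain F rich minF encF p₀ k).2
    have m1 := memG z (k := k) (by omega)
    have m2 := memH (G z) (k := k) (by omega)
    have q1 := h₂ _ m1
    have q2 := h₂ _ m2
    exact Subtype.ext (q2.symm.trans q1)
  have hHG : ∀ z, G (H z) = z := by
    intro z
    set k := max (encF z) (encF (H z)) + 1
    obtain ⟨⟨e₁, h₁⟩, ⟨e₂, h₂⟩⟩ := (bchain F rich minF encF p₀ k).2
    have m1 := memH z (k := k) (by omega)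
    have m2 := memG (H z) (k := k) (by omega)
    have q1 := h₁ _ m1
    have q2 := h₁ _ m2
    exact Subtype.ext (q2.symm.trans q1)
  refine ⟨{ toFun := G, invFun := H, left_inv := hGH, right_inv := hHG,
            map_fun' := fun {m} f _ => isEmptyElim f,
            map_rel' := ?_ }, ?_⟩
  · intro n r x
    obtain ⟨k, hk⟩ := hcommon (fun i => max (encF (x i)) (encF (G (x i))))
    obtain ⟨⟨e₁, h₁⟩, ⟨e₂, h₂⟩⟩ := (bchain F rich minF encF p₀ k).2
    have hmem : ∀ i, (x i, G (x i)) ∈ (bchain F rich minF encF p₀ k).1 := by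
      intro i; exact memG (x i) (k := k) (by have := hk i; omega)
    constructor
    · intro h
      have h' : RelMap r (fun i => ((G (x i) : M))) := h
      have h2 : RelMap r (e₂ ∘ fun i => ((G (x i) : M))) := e₂.map_rel r _ h'
      have h3 : (e₂ ∘ fun i => ((G (x i) : M))) = fun i => ((x i : M)) := by
        funext i; exact h₂ _ (hmem i)
      rw [h3] at h2
      exact h2
    · intro h
      have h' : RelMap r (fun i => ((x i : M))) := h
      have h2 : RelMap r (e₁ ∘ fun i => ((x i : M))) := e₁.map_rel r _ h'
      have h3 : (e₁ ∘ fun i => ((x i : M))) = fun i => ((G (x i) : M)) := by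
        funext i; exact h₁ _ (hmem i)
      rw [h3] at h2
      exact h2
  · intro q hq
    set k := encF q.1 + 1
    obtain ⟨⟨e₁, h₁⟩, ⟨e₂, h₂⟩⟩ := (bchain F rich minF encF p₀ k).2
    have m0 : q ∈ (bchain F rich minF encF p₀ k).1 :=
      (bchain_prefix F rich minF encF p₀ (Nat.zero_le k)).subset hq
    have m1 := memG q.1 (k := k) (by omega)
    have q1 := h₁ _ m0
    have q2 := h₁ _ m1
    show G q.1 = q.2
    exact Subtype.ext (q2.symm.trans q1)




variable (hhh : HomHomogeneous L M)

include minF hhh in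
theorem endo_restore {m : ℕ} (φ : ↥F →[L] ↥F) (x : Fin m → ↥F) :
    ∃ u : M →[L] M, ∀ i, u ((φ (x i) : M)) = (x i : M) := by
  obtain ⟨e, he⟩ := extend_hom hhh (fun i => ((x i : M))) (fun i => ((φ (x i) : M)))
    (fun i j hij => congrArg (fun t : ↥F => ((φ t : M))) (Subtype.ext hij))
    (by
      intro m' R σ h
      have h1 : RelMap R (x ∘ σ) := h
      have h2 : RelMap R (φ ∘ x ∘ σ) := φ.map_rel R _ h1
      exact h2)
  obtain ⟨u, hu⟩ := minF (fun i => ((x i : M))) (fun i => (x i).2) e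
  exact ⟨u, fun i => by rw [← he i]; exact hu i⟩

include minF hhh in
theorem isCore_F (φ : ↥F →[L] ↥F) : ∃ e : ↥F ↪[L] ↥F, ∀ x, e x = φ x := by
  have hinj : Function.Injective φ := by
    intro x₁ x₂ h
    obtain ⟨u, hu⟩ := endo_restore F minF hhh φ ![x₁, x₂]
    have h0 := hu 0
    have h1 := hu 1
    simp only [Matrix.cons_val_zero, Matrix.cons_val_one, Matrix.head_cons] at h0 h1
    apply Subtype.ext
    rw [← h0, ← h1, h]
  refine ⟨{ toFun := φ, inj' := hinj,
            map_fun' := fun {m} f _ => isEmptyElim f,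
            map_rel' := ?_ }, fun x => rfl⟩
  intro m r x
  constructor
  · intro h
    obtain ⟨u, hu⟩ := endo_restore F minF hhh φ x
    have h1 : RelMap r (fun i => ((φ (x i) : M))) := h
    have h2 : RelMap r (u ∘ fun i => ((φ (x i) : M))) := u.map_rel r _ h1
    have h3 : (u ∘ fun i => ((φ (x i) : M))) = fun i => ((x i : M)) := by
      funext i; exact hu i
    rw [h3] at h2
    exact h2
  · intro h
    exact φ.map_rel r x h

/-- states for constructing the hom `M → F` -/
def POk (p : List (M × M)) : Prop :=
  (∃ e : M →[L] M, ∀ q ∈ p, e q.1 = q.2) ∧ ∀ q ∈ p, q.2 ∈ (F : Set M)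

include rich in
theorem step2 {p : List (M × M)} (h : POk F p) (z : M) :
    ∃ y : M, POk F (p ++ [(z, y)]) := by
  classical
  obtain ⟨⟨e, he⟩, hmem⟩ := h
  obtain ⟨y, hyF, g, hg, hgz⟩ := rich (p.map Prod.snd).toFinset
    (by intro x hx
        simp only [List.coe_toFinset, Set.mem_setOf_eq, List.mem_map] at hx
        obtain ⟨q, hq, rfl⟩ := hx
        exact hmem q hq) (e z)
  refine ⟨y, ⟨g.comp e, ?_⟩, ?_⟩
  · intro q hq
    rcases List.mem_append.1 hq with hq | hq
    · have : g q.2 = q.2 := hg _ (by simp only [List.mem_toFinset, List.mem_map]; exact ⟨q, hq, rfl⟩)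
      simp only [Hom.comp_apply, he q hq]; exact this
    · simp only [List.mem_singleton] at hq; subst hq
      simpa [Hom.comp_apply] using hgz
  · intro q hq
    rcases List.mem_append.1 hq with hq | hq
    · exact hmem q hq
    · simp only [List.mem_singleton] at hq; subst hq; exact hyF

variable (enc : M → ℕ) (henc : Function.Injective enc)

noncomputable def chain2 : ℕ → {p : List (M × M) // POk F p}
  | 0 => ⟨[], ⟨⟨Hom.id L M, by simp⟩, by simp⟩⟩
  | (k+1) =>
      match Function.partialInv enc k with
      | none => chain2 k
      | some z => ⟨(chain2 k).1 ++ [(z, Classical.choose (step2 F rich (chain2 k).2 z))],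
          Classical.choose_spec (step2 F rich (chain2 k).2 z)⟩

noncomputable def h2v (z : M) : M :=
  Classical.choose (step2 F rich (chain2 F rich enc (enc z)).2 z)

theorem chain2_prefix_succ (k : ℕ) :
    (chain2 F rich enc k).1 <+: (chain2 F rich enc (k+1)).1 := by
  show (chain2 F rich enc k).1 <+: ((chain2 F rich enc (k+1) : {p : List (M × M) // POk F p})).1
  rw [chain2]
  rcases h : Function.partialInv enc k with _ | z
  · simp
  · simp [List.prefix_append]

theorem chain2_prefix {k k' : ℕ} (h : k ≤ k') :
    (chain2 F rich enc k).1 <+: (chain2 F rich enc k').1 := by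
  induction k' with
  | zero => cases Nat.le_zero.1 h; exact List.prefix_rfl
  | succ n ih =>
      rcases Nat.lt_or_ge k (n+1) with h' | h'
      · exact (ih (by omega)).trans (chain2_prefix_succ F rich enc n)
      · have : k = n + 1 := by omega
        subst this; exact List.prefix_rfl

include henc in
theorem chain2_mem (z : M) {k : ℕ} (h : enc z < k) :
    (z, h2v F rich enc z) ∈ (chain2 F rich enc k).1 := by
  have hsome : Function.partialInv enc (enc z) = some z := Function.partialInv_left henc z
  have hstage : (chain2 F rich enc (enc z + 1)).1 =
      (chain2 F rich enc (enc z)).1 ++ [(z, h2v F rich enc z)] := by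
    show ((chain2 F rich enc (enc z + 1) : {p : List (M × M) // POk F p})).1 = _
    rw [chain2, hsome]
    rfl
  exact (chain2_prefix F rich enc (show enc z + 1 ≤ k by omega)).subset
    (by rw [hstage]; simp)

include henc in
theorem h2v_memF (z : M) : h2v F rich enc z ∈ (F : Set M) := by
  have hm := chain2_mem F rich enc henc z (k := enc z + 1) (by omega)
  exact (chain2 F rich enc (enc z + 1)).2.2 _ hm

include rich henc in
theorem exists_homF : ∃ h : M →[L] ↥F, True := by
  refine ⟨{ toFun := fun z => ⟨h2v F rich enc z, h2v_memF F rich enc henc z⟩,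
            map_fun' := fun {m} f _ => isEmptyElim f,
            map_rel' := ?_ }, trivial⟩
  intro m r x h
  have hcommon : ∃ k, ∀ i, enc (x i) < k := by
    refine ⟨(Finset.univ.sup fun i => enc (x i)) + 1, fun i => ?_⟩
    exact Nat.lt_succ_of_le (Finset.le_sup (f := fun i => enc (x i)) (Finset.mem_univ i))
  obtain ⟨k, hk⟩ := hcommon
  obtain ⟨⟨e, he⟩, -⟩ := (chain2 F rich enc k).2
  have hvals : ∀ i, e (x i) = h2v F rich enc (x i) := by
    intro i
    exact he _ (chain2_mem F rich enc henc (x i) (hk i))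
  have h2 : RelMap r (e ∘ x) := e.map_rel r x h
  have h3 : (e ∘ x) = fun i => h2v F rich enc (x i) := by funext i; exact hvals i
  rw [h3] at h2
  exact h2

include rich minF in
theorem realize {n : ℕ} (b : Fin n → M) (hb : Min L b) :
    ∃ y : Fin n → ↥F, (∃ e₁ : M →[L] M, ∀ i, e₁ (b i) = ((y i : M))) ∧
      (∃ e₂ : M →[L] M, ∀ i, e₂ ((y i : M)) = b i) := by
  classical
  induction n with
  | zero =>
      exact ⟨fun i => i.elim0, ⟨Hom.id L M, fun i => i.elim0⟩, ⟨Hom.id L M, fun i => i.elim0⟩⟩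
  | succ n ih =>
      have hb' : Min L (b ∘ Fin.castSucc) := hb.comp _
      obtain ⟨y', ⟨e₁, he₁⟩, ⟨e₂, he₂⟩⟩ := ih _ hb'
      obtain ⟨w, hwF, g, hg, hgz⟩ := rich (Finset.image (fun i => ((y' i : M))) Finset.univ)
        (by intro x hx
            simp only [Finset.coe_image, Set.mem_image] at hx
            obtain ⟨i, _, rfl⟩ := hx
            exact (y' i).2) (e₁ (b (Fin.last n)))
      set E₁ := g.comp e₁ with hE₁
      set y : Fin (n+1) → ↥F := Fin.snoc y' ⟨w, hwF⟩ with hy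
      have hE : ∀ i, E₁ (b i) = ((y i : M)) := by
        intro i
        refine Fin.lastCases ?_ ?_ i
        · simp only [hy, Fin.snoc_last, hE₁, Hom.comp_apply]
          exact hgz
        · intro j
          simp only [hy, Fin.snoc_castSucc, hE₁, Hom.comp_apply]
          rw [show (b (Fin.castSucc j)) = (b ∘ Fin.castSucc) j from rfl, he₁ j]
          exact hg _ (by simp)
      obtain ⟨u, hu⟩ := hb E₁
      refine ⟨y, ⟨E₁, hE⟩, ⟨u, fun i => ?_⟩⟩
      rw [← hE i]
      exact hu i




variable (bnf : ∀ p₀ : {p : List (↥F × ↥F) // IsoList F p},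
    ∃ G : ↥F ≃[L] ↥F, ∀ q ∈ p₀.1, G q.1 = q.2)
variable (realizeH : ∀ {n : ℕ} (b : Fin n → M), Min L b →
    ∃ y : Fin n → ↥F, (∃ e₁ : M →[L] M, ∀ i, e₁ (b i) = ((y i : M))) ∧
      (∃ e₂ : M →[L] M, ∀ i, e₂ ((y i : M)) = b i))

theorem getmem {α : Type*} (l : List α) (i : Fin l.length) : l.get i ∈ l := by
  exact List.get_mem l i

section Ultra

include bnf in
theorem ultra (hhh : HomHomogeneous L M) : Ultrahomogeneous L ↥F := by
  classical
  intro S hSfin f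
  set ls : List ↥F := hSfin.toFinset.toList with hls0
  have hls : ∀ x, x ∈ ls ↔ x ∈ S := by
    intro x
    rw [hls0, Finset.mem_toList, Set.Finite.mem_toFinset]
    rfl
  set p₀ : List (↥F × ↥F) :=
    ls.attach.map (fun x => (x.1, f ⟨x.1, (hls x.1).1 x.2⟩)) with hp₀
  have hspec : ∀ q ∈ p₀, ∃ hm : q.1 ∈ S, q.2 = f ⟨q.1, hm⟩ := by
    intro q hq
    obtain ⟨x, _, rfl⟩ := List.mem_map.1 hq
    exact ⟨(hls x.1).1 x.2, rfl⟩
  have hiso : IsoList F p₀ := by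
    constructor
    · obtain ⟨e, he⟩ := extend_hom hhh
        (fun i : Fin p₀.length => ((p₀.get i).1 : M))
        (fun i : Fin p₀.length => ((p₀.get i).2 : M))
        (by
          intro i j hij
          obtain ⟨h1, e1⟩ := hspec _ (getmem p₀ i)
          obtain ⟨h2, e2⟩ := hspec _ (getmem p₀ j)
          have : (p₀.get i).1 = (p₀.get j).1 := Subtype.ext hij
          show ((p₀.get i).2 : M) = ((p₀.get j).2 : M)
          rw [e1, e2]
          exact congrArg (fun t : ↥S => ((f t : ↥F) : M)) (Subtype.ext this))
        (by
          intro m R σ h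
          choose hm hf using fun i => hspec _ (getmem p₀ (σ i))
          have h1 : RelMap R (fun i => (⟨(p₀.get (σ i)).1, hm i⟩ : ↥S)) := h
          have h2 := (f.map_rel' R _).2 h1
          have h3 : RelMap R (fun i => ((f ⟨(p₀.get (σ i)).1, hm i⟩ : ↥F) : M)) := h2
          have h4 : (fun i => ((f ⟨(p₀.get (σ i)).1, hm i⟩ : ↥F) : M))
              = (fun i : Fin p₀.length => ((p₀.get i).2 : M)) ∘ σ := by
            funext i
            simp only [Function.comp_apply]
            rw [← hf i]
          rw [h4] at h3
          exact h3)
      refine ⟨e, ?_⟩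
      intro q hq
      obtain ⟨i, rfl⟩ := List.mem_iff_get.1 hq
      exact he i
    · obtain ⟨e, he⟩ := extend_hom hhh
        (fun i : Fin p₀.length => ((p₀.get i).2 : M))
        (fun i : Fin p₀.length => ((p₀.get i).1 : M))
        (by
          intro i j hij
          obtain ⟨h1, e1⟩ := hspec _ (getmem p₀ i)
          obtain ⟨h2, e2⟩ := hspec _ (getmem p₀ j)
          have hfe : f ⟨(p₀.get i).1, h1⟩ = f ⟨(p₀.get j).1, h2⟩ := by
            apply Subtype.ext
            rw [← e1, ← e2]; exact hij
          have := f.inj' hfe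
          show ((p₀.get i).1 : M) = ((p₀.get j).1 : M)
          exact congrArg Subtype.val (congrArg Subtype.val this))
        (by
          intro m R σ h
          choose hm hf using fun i => hspec _ (getmem p₀ (σ i))
          have h3 : RelMap R (fun i => ((f ⟨(p₀.get (σ i)).1, hm i⟩ : ↥F) : M)) := by
            have h4 : (fun i => ((f ⟨(p₀.get (σ i)).1, hm i⟩ : ↥F) : M))
                = (fun i : Fin p₀.length => ((p₀.get i).2 : M)) ∘ σ := by
              funext i
              simp only [Function.comp_apply]
              rw [← hf i]
            rw [h4]
            exact h
          have h1 : RelMap R (fun i => (f ⟨(p₀.get (σ i)).1, hm i⟩ : ↥F)) := h3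
          have h2 := (f.map_rel' R _).1 h1
          exact h2)
      refine ⟨e, ?_⟩
      intro q hq
      obtain ⟨i, rfl⟩ := List.mem_iff_get.1 hq
      exact he i
  obtain ⟨G, hG⟩ := bnf ⟨p₀, hiso⟩
  refine ⟨G, fun x => ?_⟩
  have hx : (x : ↥F) ∈ ls := (hls _).2 x.2
  have hpair : ((x : ↥F), f x) ∈ p₀ := by
    refine List.mem_map.2 ⟨⟨(x : ↥F), hx⟩, List.mem_attach _ _, ?_⟩
    have hxx : (⟨(x : ↥F), (hls _).1 hx⟩ : ↥S) = x := Subtype.ext rfl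
    rw [Prod.mk.injEq]
    exact ⟨rfl, congrArg f hxx⟩
  exact hG _ hpair

end Ultra

include minF bnf in
theorem oligo (hwo : WeaklyOligomorphic L M) (hhh : HomHomogeneous L M) :
    Oligomorphic L ↥F := by
  classical
  intro n
  set Φ : (Fin n → ↥F) → Set (Fin n → M) := fun a => orb L (fun i => ((a i : M))) with hΦ
  have hfin : (Set.range Φ).Finite := (hwo n).subset
    (by rintro ρ ⟨a, rfl⟩; exact orb_invariant _)
  haveI := hfin.to_subtype
  refine ⟨Set.range (fun ρ : ↥(Set.range Φ) => Classical.choose ρ.2), Set.finite_range _,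
    fun a => ?_⟩
  set ρ : ↥(Set.range Φ) := ⟨Φ a, Set.mem_range_self a⟩ with hρ
  set b := Classical.choose ρ.2 with hbdef
  have hb : Φ b = Φ a := Classical.choose_spec ρ.2
  refine ⟨b, Set.mem_range_self _, ?_⟩
  have h1 : (fun i => ((a i : M))) ∈ orb L (fun i => ((b i : M))) := by
    show (fun i => ((a i : M))) ∈ Φ b
    rw [hb]
    exact orb_self _
  have h2 : (fun i => ((b i : M))) ∈ orb L (fun i => ((a i : M))) := by
    show (fun i => ((b i : M))) ∈ Φ a
    rw [← hb]
    exact orb_self _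
  obtain ⟨e₁, he₁⟩ := h1
  obtain ⟨e₂, he₂⟩ := h2
  set p₀ : List (↥F × ↥F) := (List.finRange n).map (fun i => (b i, a i)) with hp₀
  have hiso : IsoList F p₀ := by
    constructor
    · refine ⟨e₁, ?_⟩
      intro q hq
      obtain ⟨i, _, rfl⟩ := List.mem_map.1 hq
      exact he₁ i
    · refine ⟨e₂, ?_⟩
      intro q hq
      obtain ⟨i, _, rfl⟩ := List.mem_map.1 hq
      exact he₂ i
  obtain ⟨G, hG⟩ := bnf ⟨p₀, hiso⟩
  refine ⟨G, ?_⟩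
  funext i
  exact hG (b i, a i) (List.mem_map.2 ⟨i, List.mem_finRange i, rfl⟩)


section Age

include minF in
theorem age_sub (hhh : HomHomogeneous L M) :
    Age.{u, v, w, w'} L ↥F ⊆ CA.{u, v, w, w'} L M := by
  classical
  rintro B ⟨hBfin, ⟨emb⟩⟩
  refine ⟨⟨hBfin, ⟨F.subtype.comp emb⟩⟩, ?_⟩
  rintro B' ⟨hB'fin, ⟨emb'⟩⟩ f
  haveI := Fintype.ofFinite B
  set e : B ≃ Fin (Fintype.card B) := Fintype.equivFin B with he
  set β : Fin (Fintype.card B) → B := fun i => e.symm i with hβ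
  set a : Fin (Fintype.card B) → M := fun i => ((emb (β i) : ↥F) : M) with ha
  set b : Fin (Fintype.card B) → M := fun i => emb' (f (β i)) with hbb
  obtain ⟨g, hg⟩ := extend_hom hhh a b
    (by
      intro i j hij
      have h1 : emb (β i) = emb (β j) := Subtype.ext hij
      have h2 : β i = β j := emb.injective h1
      show emb' (f (β i)) = emb' (f (β j))
      rw [h2])
    (by
      intro m R σ h
      have h1 : RelMap R (fun j => (emb (β (σ j)) : ↥F)) := h
      have h2 : RelMap R (β ∘ σ) := (emb.map_rel R (β ∘ σ)).1 h1
      have h3 : RelMap R (f ∘ (β ∘ σ)) := f.map_rel R _ h2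
      have h4 : RelMap R (emb' ∘ (f ∘ (β ∘ σ))) := (emb'.map_rel R _).2 h3
      exact h4)
  obtain ⟨u, hu⟩ := minF a (fun i => (emb (β i)).2) g
  have hub : ∀ i, u (b i) = a i := by
    intro i
    rw [← hg i]
    exact hu i
  have hβe : ∀ x : B, β (e x) = x := fun x => e.symm_apply_apply x
  have hinj : Function.Injective f := by
    intro x y hxy
    have h1 : b (e x) = b (e y) := by
      show emb' (f (β (e x))) = emb' (f (β (e y)))
      rw [hβe, hβe, hxy]
    have h2 : a (e x) = a (e y) := by rw [← hub, ← hub, h1]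
    have h3 : emb (β (e x)) = emb (β (e y)) := Subtype.ext h2
    have h4 := emb.injective h3
    rwa [hβe, hβe] at h4
  refine ⟨{ toFun := f, inj' := hinj,
            map_fun' := fun {m} F' _ => isEmptyElim F',
            map_rel' := ?_ }, fun x => rfl⟩
  intro m r x
  set σ : Fin m → Fin (Fintype.card B) := fun j => e (x j) with hσ
  have hβσ : ∀ j, β (σ j) = x j := fun j => hβe (x j)
  constructor
  · intro h
    have h1 : RelMap r (emb' ∘ (f ∘ x)) := (emb'.map_rel r (f ∘ x)).2 h
    have h2 : (emb' ∘ (f ∘ x)) = b ∘ σ := by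
      funext j
      show emb' (f (x j)) = emb' (f (β (σ j)))
      rw [hβσ]
    rw [h2] at h1
    have h3 : RelMap r (u ∘ (b ∘ σ)) := u.map_rel r _ h1
    have h4 : (u ∘ (b ∘ σ)) = fun j => ((emb (x j) : ↥F) : M) := by
      funext j
      show u (b (σ j)) = _
      rw [hub]
      show ((emb (β (σ j)) : ↥F) : M) = _
      rw [hβσ]
    rw [h4] at h3
    have h5 : RelMap r (fun j => (emb (x j) : ↥F)) := h3
    exact (emb.map_rel r x).1 h5
  · intro h
    exact f.map_rel r x h

include minF realizeH in
theorem age_sup (hwo : WeaklyOligomorphic L M) :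
    CA.{u, v, w, w'} L M ⊆ Age.{u, v, w, w'} L ↥F := by
  classical
  rintro B ⟨⟨hBfin, ⟨emb⟩⟩, hirr⟩
  refine ⟨hBfin, ?_⟩
  haveI := Fintype.ofFinite B
  set e : B ≃ Fin (Fintype.card B) := Fintype.equivFin B with he
  set β : Fin (Fintype.card B) → B := fun i => e.symm i with hβ
  set t₀ : Fin (Fintype.card B) → M := fun i => emb (β i) with ht₀
  obtain ⟨b, ⟨v, hv⟩, hbmin⟩ := exists_min_orb hwo t₀
  have hβe : ∀ x : B, β (e x) = x := fun x => e.symm_apply_apply x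
  have hbe : ∀ x : B, b (e x) = v (emb x) := by
    intro x
    have h1 := hv (e x)
    rw [← h1]
    show v (emb (β (e x))) = v (emb x)
    rw [hβe]
  set Sb : L.Substructure M := ⟨Set.range b, fun {m} F' _ _ => isEmptyElim F'⟩ with hSb
  haveI hfinSb : Finite ↥Sb := by
    have : Finite ↥(Set.range b) := (Set.finite_range b).to_subtype
    exact this
  haveI := Fintype.ofFinite ↥Sb
  set κ : ↥Sb ≃ ULift.{w} (Fin (Fintype.card ↥Sb)) :=
    (Fintype.equivFin ↥Sb).trans Equiv.ulift.symm with hκ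
  letI stru : L.Structure (ULift.{w} (Fin (Fintype.card ↥Sb))) := κ.inducedStructure
  set B'' : Bundled.{w} L.Structure := ⟨ULift.{w} (Fin (Fintype.card ↥Sb)), stru⟩ with hB''
  set ι := Equiv.inducedStructureEquiv (L := L) κ with hι
  have hB''age : B'' ∈ Age.{u, v, w, w'} L M :=
    ⟨by infer_instance, ⟨Sb.subtype.comp ι.symm.toEmbedding⟩⟩
  have hmem : ∀ x : B, v (emb x) ∈ Sb := by
    intro x
    exact ⟨e x, hbe x⟩
  set g₀ : B →[L] ↥Sb := Hom.codRestrict Sb (v.comp emb.toHom) hmem with hg₀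
  set g₁ : B →[L] B'' := ι.toHom.comp g₀ with hg₁
  obtain ⟨E, hE⟩ := hirr B'' hB''age g₁
  have hinj : Function.Injective (fun x : B => v (emb x)) := by
    intro x y hxy
    have h1 : g₀ x = g₀ y := Subtype.ext (by exact hxy)
    have h2 : g₁ x = g₁ y := by show ι (g₀ x) = ι (g₀ y); rw [h1]
    have h3 : E x = E y := by rw [hE, hE, h2]
    exact E.injective h3
  have hrefl : ∀ (m' : ℕ) (R : L.Relations m') (xs : Fin m' → B),
      RelMap R (fun j => v (emb (xs j))) → RelMap R xs := by
    intro m' R xs h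
    have h2 := (ι.map_rel R (fun j => g₀ (xs j))).2 (by exact h)
    have h3 : (ι ∘ (fun j => g₀ (xs j))) = fun j => E (xs j) := by
      funext j
      show ι (g₀ (xs j)) = E (xs j)
      rw [hE]
      rfl
    rw [h3] at h2
    exact (E.map_rel R xs).1 h2
  obtain ⟨y, ⟨e₁, he₁⟩, ⟨e₂, he₂⟩⟩ := realizeH b hbmin
  refine ⟨{ toFun := fun x => y (e x),
            inj' := ?_,
            map_fun' := fun {m} F' _ => isEmptyElim F',
            map_rel' := ?_ }⟩
  · intro x y' hxy
    have h1 : ((y (e x) : M)) = ((y (e y') : M)) := congrArg _ hxy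
    have h2 : b (e x) = b (e y') := by rw [← he₂, ← he₂, h1]
    rw [hbe, hbe] at h2
    exact hinj h2
  · intro m r xs
    constructor
    · intro h
      have h1 : RelMap r (fun j => ((y (e (xs j)) : M))) := h
      have h2 : RelMap r (e₂ ∘ fun j => ((y (e (xs j)) : M))) := e₂.map_rel r _ h1
      have h3 : (e₂ ∘ fun j => ((y (e (xs j)) : M))) = fun j => v (emb (xs j)) := by
        funext j
        show e₂ ((y (e (xs j)) : M)) = _
        rw [he₂, hbe]
      rw [h3] at h2
      exact hrefl m r xs h2
    · intro h
      have h1 : RelMap r (emb ∘ xs) := (emb.map_rel r xs).2 h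
      have h2 : RelMap r (v ∘ (emb ∘ xs)) := v.map_rel r _ h1
      have h3 : RelMap r (e₁ ∘ (v ∘ (emb ∘ xs))) := e₁.map_rel r _ h2
      have h4 : (e₁ ∘ (v ∘ (emb ∘ xs))) = fun j => ((y (e (xs j)) : M)) := by
        funext j
        show e₁ (v (emb (xs j))) = _
        rw [← hbe, he₁]
      rw [h4] at h3
      exact h3

end Age



end Stmt15

/-- Every countable weakly oligomorphic homomorphism-homogeneous structure `M`
has a core `F` that is ultrahomogeneous, oligomorphic, and satisfies `Age F = C_M` (so `F` is
the Fraïssé limit of `C_M`). -/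
theorem stmt15 (L : FirstOrder.Language.{u, v}) [L.IsRelational]
    (M : Type w') [L.Structure M] [Countable M]
    (hwo : WeaklyOligomorphic L M) (hhh : HomHomogeneous L M) :
    ∃ F : L.Substructure M, IsCoreOf L M F ∧ Ultrahomogeneous L F ∧ Oligomorphic L F ∧
      Age.{u, v, w, w'} L F = CA.{u, v, w, w'} L M := by
  classical
  obtain ⟨enc, henc⟩ := Countable.exists_injective_nat M
  set F : L.Substructure M := ⟨Stmt15.Fcar L M hwo enc, fun {n} f => isEmptyElim f⟩ with hF
  have hrich : ∀ (s : Finset M), ↑s ⊆ (F : Set M) → ∀ z : M,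
      ∃ y ∈ (F : Set M), ∃ g : M →[L] M, (∀ w ∈ s, g w = w) ∧ g z = y :=
    fun s hs z => Stmt15.rich_all hwo enc henc s hs z
  have hminF : ∀ {n : ℕ} (t : Fin n → M), (∀ i, t i ∈ (F : Set M)) → Stmt15.Min L t :=
    fun t ht => Stmt15.minF_all hwo enc t ht
  obtain ⟨encF, hencF⟩ := Countable.exists_injective_nat ↥F
  have hbnf : ∀ p₀ : {p : List (↥F × ↥F) // Stmt15.IsoList F p},
      ∃ G : ↥F ≃[L] ↥F, ∀ q ∈ p₀.1, G q.1 = q.2 :=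
    fun p₀ => Stmt15.bnf F hrich hminF encF hencF p₀
  have hrealize : ∀ {n : ℕ} (b : Fin n → M), Stmt15.Min L b →
      ∃ y : Fin n → ↥F, (∃ e₁ : M →[L] M, ∀ i, e₁ (b i) = ((y i : M))) ∧
        (∃ e₂ : M →[L] M, ∀ i, e₂ ((y i : M)) = b i) :=
    fun b hb => Stmt15.realize F hrich hminF b hb
  refine ⟨F, ⟨?_, ?_⟩, ?_, ?_, ?_⟩
  · intro φ
    exact Stmt15.isCore_F F hminF hhh φ
  · obtain ⟨h2, -⟩ := Stmt15.exists_homF F hrich enc henc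
    exact ⟨F.subtype.toHom.comp h2, fun x => (h2 x).2⟩
  · exact Stmt15.ultra F hbnf hhh
  · exact Stmt15.oligo F hminF hbnf hwo hhh
  · exact Set.Subset.antisymm (Stmt15.age_sub F hminF hhh)
      (Stmt15.age_sup F hminF hrealize hwo)
end

section
/- Let A be a countable weakly oligomorphic homomorphism-homogeneous relational structure. Then any two cores of A that are themselves homomorphism-homogeneous are isomorphic; moreover, every homomorphism-homogeneous core of A is oligomorphic and homogeneous (ultrahomogeneous). -/
open FirstOrder FirstOrder.Language FirstOrder.Language.Structure CategoryTheory

universe u v w w' w'' w'''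

section AuxStmt16

open FirstOrder.Language.Substructure

variable {L : FirstOrder.Language.{u, v}}

/-- If there are homomorphisms both ways between `X` and `Y` and `X` is a core, then the
homomorphism `X → Y` is (pointwise equal to) an embedding. -/
theorem aux_emb_of_homs {X : Type*} {Y : Type*} [L.Structure X] [L.Structure Y]
    (p : X →[L] Y) (q : Y →[L] X) (coreX : IsCore L X) :
    ∃ e : X ↪[L] Y, ∀ x, e x = p x := by
  obtain ⟨e, he⟩ := coreX (q.comp p)
  have hinj : Function.Injective ⇑p := by
    intro a b hab
    apply e.injective
    rw [he, he, Hom.comp_apply, Hom.comp_apply, hab]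
  have hrel : ∀ {n : ℕ} (r : L.Relations n) (x : Fin n → X),
      Structure.RelMap r (⇑p ∘ x) ↔ Structure.RelMap r x := by
    intro n r x
    constructor
    · intro hr
      have h2 : Structure.RelMap r (⇑(q.comp p) ∘ x) := q.map_rel r (⇑p ∘ x) hr
      have h3 : Structure.RelMap r (⇑e ∘ x) := by
        have : (⇑e ∘ x) = (⇑(q.comp p) ∘ x) := by funext i; exact he (x i)
        rw [this]; exact h2
      exact (e.map_rel' r x).1 h3
    · exact fun hr => p.map_rel r x hr
  exact ⟨⟨⟨⇑p, hinj⟩, fun {n} f x => p.map_fun f x, fun {n} r x => hrel r x⟩, fun _ => rfl⟩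

/-- If there is an embedding `X ↪ Y` and `Y` is a homomorphism-homogeneous core, then
`(X, Y)` is an extension pair. -/
theorem aux_extensionPair {X : Type*} {Y : Type*} [L.Structure X] [L.Structure Y]
    [L.IsRelational] (h : X ↪[L] Y) (hhY : HomHomogeneous L Y) (coreY : IsCore L Y) :
    L.IsExtensionPair X Y := by
  rw [isExtensionPair_iff_exists_embedding_closure_singleton_sup]
  intro S hS f m
  haveI : Finite S := hS.finite
  have hfin : ((S.map h.toHom : L.Substructure Y) : Set Y).Finite := by
    have h1 : ((S.map h.toHom : L.Substructure Y) : Set Y) = ⇑h '' (S : Set X) := by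
      ext y
      simp [Substructure.mem_map]
    rw [h1]
    exact ((S : Set X).toFinite).image _
  let ψ := h.substructureEquivMap S
  let φ : (S.map h.toHom : L.Substructure Y) →[L] Y :=
    f.toHom.comp ψ.symm.toEmbedding.toHom
  obtain ⟨g₀, hg₀⟩ := hhY _ hfin φ
  obtain ⟨e, he⟩ := coreY g₀
  refine ⟨(e.comp h).comp (Substructure.subtype _), ?_⟩
  ext x
  have hmem : h ↑x ∈ S.map h.toHom := ⟨↑x, x.2, rfl⟩
  have h2 : e (h ↑x) = φ ⟨h ↑x, hmem⟩ := by rw [he]; exact hg₀ ⟨h ↑x, hmem⟩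
  have h3 : ψ.symm ⟨h ↑x, hmem⟩ = x := by
    have : (⟨h ↑x, hmem⟩ : (S.map h.toHom : L.Substructure Y)) = ψ x :=
      Subtype.ext (h.substructureEquivMap_apply S x).symm
    rw [this, FirstOrder.Language.Equiv.symm_apply_apply]
  calc f x = f (ψ.symm ⟨h ↑x, hmem⟩) := by rw [h3]
    _ = φ ⟨h ↑x, hmem⟩ := rfl
    _ = e (h ↑x) := h2.symm
    _ = ((e.comp h).comp (Substructure.subtype _)) (Substructure.inclusion le_sup_right x) := by
        simp [Embedding.comp_apply]

/-- A countable homomorphism-homogeneous core is ultrahomogeneous. -/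
theorem aux_ultra {Y : Type*} [L.Structure Y] [L.IsRelational] [Countable Y]
    (hh : HomHomogeneous L Y) (core : IsCore L Y) : Ultrahomogeneous L Y := by
  have ep : L.IsExtensionPair Y Y := aux_extensionPair (Embedding.refl L Y) hh core
  intro S hSfin f
  haveI : Finite S := hSfin.to_subtype
  have hfg : S.FG := Substructure.fg_iff_finite.mpr inferInstance
  let g : L.FGEquiv Y Y := ⟨⟨S, f.toHom.range, f.equivRange⟩, hfg⟩
  obtain ⟨γ, hγ⟩ := FirstOrder.Language.equiv_between_cg Structure.cg_of_countable
    Structure.cg_of_countable g ep ep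
  refine ⟨γ, fun x => ?_⟩
  have h1 := PartialEquiv.toEquiv_inclusion_apply hγ x
  have h2 := congrArg Subtype.val h1
  exact h2

/-- Every subset of a structure over a relational language is (the carrier of) a
substructure. -/
def relSub [L.IsRelational] {X : Type*} [L.Structure X] (s : Set X) : L.Substructure X :=
  ⟨s, fun {n} f => isEmptyElim f⟩

end AuxStmt16

/-- For a countable weakly oligomorphic homomorphism-homogeneous structure `M`,
any two homomorphism-homogeneous cores of `M` are isomorphic, and every homomorphism-homogeneous
core of `M` is oligomorphic and ultrahomogeneous. -/
theorem stmt16 (L : FirstOrder.Language.{u, v}) [L.IsRelational]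
    (M : Type w') [L.Structure M] [Countable M]
    (hwo : WeaklyOligomorphic L M) (hhh : HomHomogeneous L M) :
    (∀ C₁ C₂ : L.Substructure M, IsCoreOf L M C₁ → IsCoreOf L M C₂ →
      HomHomogeneous L C₁ → HomHomogeneous L C₂ → Nonempty (C₁ ≃[L] C₂)) ∧
    (∀ C : L.Substructure M, IsCoreOf L M C → HomHomogeneous L C →
      Oligomorphic L C ∧ Ultrahomogeneous L C) := by
  constructor
  · intro C₁ C₂ h1 h2 hh1 hh2
    obtain ⟨core₁, r₁, hr₁⟩ := h1
    obtain ⟨core₂, r₂, hr₂⟩ := h2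
    let p : C₁ →[L] C₂ := Hom.codRestrict C₂ (r₂.comp C₁.subtype.toHom) (fun c => hr₂ _)
    let q : C₂ →[L] C₁ := Hom.codRestrict C₁ (r₁.comp C₂.subtype.toHom) (fun c => hr₁ _)
    obtain ⟨e12, -⟩ := aux_emb_of_homs p q core₁
    obtain ⟨e21, -⟩ := aux_emb_of_homs q p core₂
    have ep12 : L.IsExtensionPair C₁ C₂ := aux_extensionPair e12 hh2 core₂
    have ep21 : L.IsExtensionPair C₂ C₁ := aux_extensionPair e21 hh1 core₁
    let E := e12.comp (Substructure.subtype (⊥ : L.Substructure C₁))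
    let g0 : L.FGEquiv C₁ C₂ := ⟨⟨⊥, E.toHom.range, E.equivRange⟩, Substructure.fg_bot⟩
    obtain ⟨γ, -⟩ := FirstOrder.Language.equiv_between_cg Structure.cg_of_countable
      Structure.cg_of_countable g0 ep12 ep21
    exact ⟨γ⟩
  · intro C hcore hh
    have hultra : Ultrahomogeneous L C := aux_ultra hh hcore.1
    refine ⟨?_, hultra⟩
    intro n
    classical
    let Orb : (Fin n → M) → Set (Fin n → M) := fun a => {b | ∃ g : M →[L] M, ⇑g ∘ a = b}
    have hOrbInv : ∀ a, Orb a ∈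
        {ρ : Set (Fin n → M) | ∀ f : M →[L] M, ∀ c ∈ ρ, ⇑f ∘ c ∈ ρ} := by
      rintro a f c ⟨g, rfl⟩
      exact ⟨f.comp g, rfl⟩
    let T : Set (Set (Fin n → M)) := Set.range (fun a : Fin n → C => Orb (fun i => ↑(a i)))
    have hT : T.Finite := (hwo n).subset (by rintro ρ ⟨a, rfl⟩; exact hOrbInv _)
    haveI := hT.to_subtype
    let rep : T → (Fin n → C) := fun t => t.2.choose
    have hrep : ∀ t : T, Orb (fun i => ↑(rep t i)) = ↑t := fun t => t.2.choose_spec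
    refine ⟨Set.range rep, Set.finite_range _, ?_⟩
    intro a
    set t : T := ⟨Orb (fun i => ↑(a i)), ⟨a, rfl⟩⟩ with ht
    set b := rep t with hbdef
    have hOrbEq : Orb (fun i => ↑(b i)) = Orb (fun i => ↑(a i)) := hrep t
    have hmem_a : (fun i => (↑(a i) : M)) ∈ Orb (fun i => ↑(b i)) := by
      rw [hOrbEq]; exact ⟨Hom.id L M, rfl⟩
    have hmem_b : (fun i => (↑(b i) : M)) ∈ Orb (fun i => ↑(a i)) := by
      rw [← hOrbEq]; exact ⟨Hom.id L M, rfl⟩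
    obtain ⟨g, hg⟩ := hmem_a
    obtain ⟨g', hg'⟩ := hmem_b
    have hgi : ∀ i, g ↑(b i) = (↑(a i) : M) := fun i => congrFun hg i
    have hg'i : ∀ i, g' ↑(a i) = (↑(b i) : M) := fun i => congrFun hg' i
    let D : L.Substructure C := relSub (Set.range b)
    have hDfin : ((D : Set C)).Finite := Set.finite_range b
    have key : ∀ x : D, ∃ i : Fin n, b i = ↑x := fun x => x.2
    choose idx hidx using key
    let φ₀ : D → C := fun x => a (idx x)
    have hkey : ∀ x : D, (↑(φ₀ x) : M) = g ↑(↑x : C) := by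
      intro x
      rw [← hgi (idx x), hidx x]
    have hkey' : ∀ x : D, g' (↑(φ₀ x) : M) = (↑(↑x : C) : M) := by
      intro x
      show g' ↑(a (idx x)) = _
      rw [hg'i (idx x), hidx x]
    have hinj : Function.Injective φ₀ := by
      intro x y hxy
      have h1 : (↑(↑x : C) : M) = ↑(↑y : C) := by
        rw [← hkey' x, ← hkey' y, hxy]
      exact Subtype.ext (Subtype.ext h1)
    have hrel : ∀ {m : ℕ} (r : L.Relations m) (v : Fin m → D),
        Structure.RelMap r (φ₀ ∘ v) ↔ Structure.RelMap r v := by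
      intro m r v
      show Structure.RelMap r (fun i => (↑(φ₀ (v i)) : M)) ↔
        Structure.RelMap r (fun i => (↑(↑(v i) : C) : M))
      constructor
      · intro hr
        have h2 := g'.map_rel r _ hr
        have h3 : (⇑g' ∘ fun i => (↑(φ₀ (v i)) : M)) = fun i => (↑(↑(v i) : C) : M) := by
          funext i; exact hkey' (v i)
        rwa [h3] at h2
      · intro hr
        have h2 := g.map_rel r _ hr
        have h3 : (⇑g ∘ fun i => (↑(↑(v i) : C) : M)) = fun i => (↑(φ₀ (v i)) : M) := by
          funext i; exact (hkey (v i)).symm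
        rwa [h3] at h2
    let φ : D ↪[L] C := ⟨⟨φ₀, hinj⟩, fun {k} f x => isEmptyElim f, fun {k} r x => hrel r x⟩
    obtain ⟨γ, hγ⟩ := hultra D hDfin φ
    refine ⟨b, ⟨t, rfl⟩, γ, ?_⟩
    funext i
    have hbD : b i ∈ D := ⟨i, rfl⟩
    have h1 : γ (b i) = φ₀ ⟨b i, hbD⟩ := hγ ⟨b i, hbD⟩
    rw [h1]
    apply Subtype.ext
    rw [hkey ⟨b i, hbD⟩]
    exact hgi i
end

section
/- Let A be a countable weakly oligomorphic relational structure. Then there exists a relational structure F over the same language such that F embeds into A, F is oligomorphic (hence F is finite or ω-categorical), and A and F are homomorphism-equivalent. -/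
open FirstOrder FirstOrder.Language FirstOrder.Language.Structure CategoryTheory

universe u v w w' w'' w'''

namespace Stmt17Aux

open Function

variable {L : FirstOrder.Language.{u, v}} {M : Type w'} [L.Structure M]

/-- A tuple is *minimal* if each of its images under an endomorphism can be mapped back
onto it pointwise by a further endomorphism. -/
def MinT (L : FirstOrder.Language.{u, v}) {M : Type w'} [L.Structure M] {ι : Type}
    (a : ι → M) : Prop :=
  ∀ g : M →[L] M, ∃ h : M →[L] M, ∀ i, h (g (a i)) = a i

theorem MinT.comp_right {ι κ : Type} {a : ι → M} (ha : MinT L a) (σ : κ → ι) :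
    MinT L fun i => a (σ i) := fun g => (ha g).imp fun _ hh i => hh (σ i)

theorem MinT.comp_left {ι : Type} {a : ι → M} (ha : MinT L a) (k : M →[L] M) :
    MinT L fun i => k (a i) := by
  intro g
  obtain ⟨h, hh⟩ := ha (g.comp k)
  refine ⟨k.comp h, fun i => ?_⟩
  have := congrArg k (hh i)
  simpa using this

/-- Orbit closure of a tuple under the endomorphism monoid. -/
def orbCl {n : ℕ} (a : Fin n → M) : Set (Fin n → M) :=
  {b | ∃ f : M →[L] M, ∀ i, f (a i) = b i}

theorem self_mem_orbCl {n : ℕ} (a : Fin n → M) : a ∈ orbCl (L := L) a :=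
  ⟨Hom.id L M, fun _ => rfl⟩

theorem orbCl_finite (hwo : WeaklyOligomorphic L M) (n : ℕ) :
    {s : Set (Fin n → M) | ∃ a, s = orbCl (L := L) a}.Finite := by
  refine (hwo n).subset ?_
  rintro s ⟨a, rfl⟩ f b ⟨g, hg⟩
  exact ⟨f.comp g, fun i => by simp [hg i]⟩

theorem exists_min (hwo : WeaklyOligomorphic L M) {n : ℕ} (a : Fin n → M) :
    ∃ f : M →[L] M, MinT L fun i => f (a i) := by
  classical
  have hS : {s : Set (Fin n → M) | ∃ f : M →[L] M, s = orbCl (L := L) fun i => f (a i)}.Finite :=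
    (orbCl_finite hwo n).subset (by rintro s ⟨f, hf⟩; exact ⟨_, hf⟩)
  have hne : {s : Set (Fin n → M) | ∃ f : M →[L] M,
      s = orbCl (L := L) fun i => f (a i)}.Nonempty := ⟨_, Hom.id L M, rfl⟩
  obtain ⟨s₀, hs₀, hmin⟩ := Set.Finite.exists_minimalFor id _ hS hne
  obtain ⟨f₀, rfl⟩ := hs₀
  refine ⟨f₀, fun g => ?_⟩
  have h1 : orbCl (L := L) (fun i => (g.comp f₀) (a i)) ∈
      {s : Set (Fin n → M) | ∃ f : M →[L] M, s = orbCl (L := L) fun i => f (a i)} :=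
    ⟨g.comp f₀, rfl⟩
  have h2 : orbCl (L := L) (fun i => (g.comp f₀) (a i)) ⊆ orbCl (L := L) fun i => f₀ (a i) := by
    rintro b ⟨h, hh⟩
    exact ⟨h.comp g, fun i => by simpa using hh i⟩
  have heq := (hmin h1 h2).antisymm h2
  simp only [id_eq] at heq
  have hm : (fun i => f₀ (a i)) ∈ orbCl (L := L) fun i => (g.comp f₀) (a i) :=
    heq ▸ self_mem_orbCl (L := L) (fun i => f₀ (a i))
  obtain ⟨h, hh⟩ := hm
  exact ⟨h, fun i => by simpa using hh i⟩

def snocN {α : Type*} (l : ℕ) (T : ℕ → α) (d : α) : ℕ → α := fun i => if i = l then d else T i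

theorem snocN_lt {α : Type*} {l : ℕ} {T : ℕ → α} {d : α} {i : ℕ} (h : i < l) :
    snocN l T d i = T i := if_neg (Nat.ne_of_lt h)

theorem snocN_self {α : Type*} {l : ℕ} {T : ℕ → α} {d : α} : snocN l T d l = d := if_pos rfl

theorem snocN_fin_eq {α : Type*} {l : ℕ} {T : ℕ → α} {d : α} :
    (fun i : Fin (l + 1) => snocN l T d i) = Fin.snoc (fun i : Fin l => T i) d := by
  funext i
  refine Fin.lastCases ?_ (fun j => ?_) i
  · simp [snocN]
  · have hj : (j : ℕ) ≠ l := Nat.ne_of_lt j.isLt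
    simp [snocN, hj, Fin.snoc_castSucc]

theorem exists_ext (hwo : WeaklyOligomorphic L M) {l : ℕ} {T : ℕ → M}
    (hT : MinT L fun i : Fin l => T i) (w : M) :
    ∃ e : M →[L] M, (∀ i, i < l → e (T i) = T i) ∧
      MinT L fun i : Fin (l + 1) => snocN l T (e w) i := by
  obtain ⟨g, hg⟩ := exists_min hwo (Fin.snoc (fun i : Fin l => T i) w)
  obtain ⟨k, hk⟩ := hT g
  refine ⟨k.comp g, fun i hi => by simpa using hk ⟨i, hi⟩, ?_⟩
  have hfun : (fun i : Fin (l + 1) => snocN l T ((k.comp g) w) i)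
      = fun i : Fin (l + 1) => k (g ((Fin.snoc (fun j : Fin l => T j) w : Fin (l + 1) → M) i)) := by
    rw [snocN_fin_eq]
    funext i
    refine Fin.lastCases ?_ (fun j => ?_) i
    · simp [Fin.snoc_last]
    · simpa [Fin.snoc_castSucc] using (hk j).symm
  rw [hfun]
  exact hg.comp_left k

/-- The state of the recursive construction: a finite minimal tuple (the first `l` values
of `T`) and a current endomorphism `q`. -/
structure StM (L : FirstOrder.Language.{u, v}) (M : Type w') [L.Structure M] where
  l : ℕ
  T : ℕ → M
  q : M →[L] M
  hmin : MinT L fun i : Fin l => T i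

variable (hwo : WeaklyOligomorphic L M)

/-- The endomorphism used to add the point `w` to the state `s`. -/
noncomputable def addE (s : StM L M) (w : M) : M →[L] M :=
  (exists_ext hwo s.hmin w).choose

theorem addE_fix (s : StM L M) (w : M) {i : ℕ} (hi : i < s.l) :
    addE hwo s w (s.T i) = s.T i :=
  (exists_ext hwo s.hmin w).choose_spec.1 i hi

/-- Add a new point to the state. -/
noncomputable def addPt (s : StM L M) (w : M) : StM L M :=
  ⟨s.l + 1, snocN s.l s.T (addE hwo s w w), (addE hwo s w).comp s.q,
    (exists_ext hwo s.hmin w).choose_spec.2⟩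

@[simp] theorem addPt_l (s : StM L M) (w : M) : (addPt hwo s w).l = s.l + 1 := rfl

theorem addPt_T_lt (s : StM L M) (w : M) {i : ℕ} (hi : i < s.l) :
    (addPt hwo s w).T i = s.T i := snocN_lt hi

theorem addPt_T_self (s : StM L M) (w : M) : (addPt hwo s w).T s.l = addE hwo s w w :=
  snocN_self

theorem addPt_q (s : StM L M) (w : M) (x : M) :
    (addPt hwo s w).q x = addE hwo s w (s.q x) := rfl

/-- Data for a back-and-forth task. -/
abbrev TaskBF : Type := Σ r : ℕ, (Fin r → ℕ) × (Fin r → ℕ) × ℕ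

abbrev Task : Type := ℕ ⊕ TaskBF

/-- Condition under which a back-and-forth task can be executed. -/
def bfCond (s : StM L M) (td : TaskBF) : Prop :=
  (∀ t, td.2.1 t < s.l) ∧ (∀ t, td.2.2.1 t < s.l) ∧ (td.2.2.2 < s.l) ∧
    ∃ f : M →[L] M, ∀ t, f (s.T (td.2.1 t)) = s.T (td.2.2.1 t)

open scoped Classical in
/-- One step of the construction. -/
noncomputable def stepSt (m : ℕ → M) (τ : ℕ → Task) (k : ℕ) (s : StM L M) : StM L M :=
  Sum.rec (fun j => addPt hwo s (s.q (m j)))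
    (fun td => if h : bfCond s td then addPt hwo s (h.2.2.2.choose (s.T td.2.2.2)) else s)
    (τ k)

theorem stepSt_inl {m : ℕ → M} {τ : ℕ → Task} {k : ℕ} (s : StM L M) {j : ℕ}
    (h : τ k = Sum.inl j) : stepSt hwo m τ k s = addPt hwo s (s.q (m j)) := by
  unfold stepSt; rw [h]

theorem stepSt_inr_pos {m : ℕ → M} {τ : ℕ → Task} {k : ℕ} (s : StM L M) {td : TaskBF}
    (h : τ k = Sum.inr td) (hc : bfCond s td) :
    stepSt hwo m τ k s = addPt hwo s (hc.2.2.2.choose (s.T td.2.2.2)) := by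
  unfold stepSt; rw [h]; exact dif_pos hc

theorem stepSt_inr_neg {m : ℕ → M} {τ : ℕ → Task} {k : ℕ} (s : StM L M) {td : TaskBF}
    (h : τ k = Sum.inr td) (hc : ¬ bfCond s td) :
    stepSt hwo m τ k s = s := by
  unfold stepSt; rw [h]; exact dif_neg hc

/-- Either the step does nothing or it adds a point. -/
theorem stepSt_cases (m : ℕ → M) (τ : ℕ → Task) (k : ℕ) (s : StM L M) :
    stepSt hwo m τ k s = s ∨ ∃ w, stepSt hwo m τ k s = addPt hwo s w := by
  rcases h : τ k with j | td
  · exact Or.inr ⟨_, stepSt_inl hwo s h⟩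
  · by_cases hc : bfCond s td
    · exact Or.inr ⟨_, stepSt_inr_pos hwo s h hc⟩
    · exact Or.inl (stepSt_inr_neg hwo s h hc)

/-- The chain of states. -/
noncomputable def chainSt (m : ℕ → M) (τ : ℕ → Task) : ℕ → StM L M
  | 0 => ⟨0, fun _ => m 0, Hom.id L M, fun _ => ⟨Hom.id L M, fun i => i.elim0⟩⟩
  | k + 1 => stepSt hwo m τ k (chainSt m τ k)

variable (m : ℕ → M) (τ : ℕ → Task)

theorem chain_l_le_succ (k : ℕ) : (chainSt hwo m τ k).l ≤ (chainSt hwo m τ (k + 1)).l := by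
  show (chainSt hwo m τ k).l ≤ (stepSt hwo m τ k (chainSt hwo m τ k)).l
  rcases stepSt_cases hwo m τ k (chainSt hwo m τ k) with h | ⟨w, h⟩ <;> rw [h]
  · exact Nat.le_succ _

theorem chain_l_mono {k k' : ℕ} (h : k ≤ k') :
    (chainSt hwo m τ k).l ≤ (chainSt hwo m τ k').l := by
  induction k' with
  | zero => simp [Nat.le_zero.mp h]
  | succ n ih =>
    rcases Nat.lt_or_ge k (n+1) with h' | h'
    · exact le_trans (ih (Nat.lt_succ_iff.mp h')) (chain_l_le_succ hwo m τ n)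
    · have : k = n + 1 := le_antisymm h h'
      simp [this]

theorem chain_T_stable_succ (k : ℕ) {i : ℕ} (hi : i < (chainSt hwo m τ k).l) :
    (chainSt hwo m τ (k + 1)).T i = (chainSt hwo m τ k).T i := by
  show (stepSt hwo m τ k (chainSt hwo m τ k)).T i = _
  rcases stepSt_cases hwo m τ k (chainSt hwo m τ k) with h | ⟨w, h⟩ <;> rw [h]
  exact addPt_T_lt hwo _ w hi

theorem chain_T_stable {k k' : ℕ} (h : k ≤ k') {i : ℕ} (hi : i < (chainSt hwo m τ k).l) :
    (chainSt hwo m τ k').T i = (chainSt hwo m τ k).T i := by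
  induction k' with
  | zero => rw [Nat.le_zero.mp h]
  | succ n ih =>
    rcases Nat.lt_or_ge k (n+1) with h' | h'
    · have h'' := Nat.lt_succ_iff.mp h'
      rw [chain_T_stable_succ hwo m τ n (lt_of_lt_of_le hi (chain_l_mono hwo m τ h''))]
      exact ih h''
    · rw [le_antisymm h h']

/-- Membership in the eventual range. -/
def memT (k : ℕ) (x : M) : Prop :=
  ∃ i, i < (chainSt hwo m τ k).l ∧ (chainSt hwo m τ k).T i = x

theorem memT_mono {k k' : ℕ} (h : k ≤ k') {x : M} (hx : memT hwo m τ k x) :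
    memT hwo m τ k' x := by
  obtain ⟨i, hi, hT⟩ := hx
  exact ⟨i, lt_of_lt_of_le hi (chain_l_mono hwo m τ h), by rw [chain_T_stable hwo m τ h hi, hT]⟩

/-- The key stability property of `q` along the chain. -/
def memQ (k : ℕ) (x : M) : Prop :=
  ∃ i, i < (chainSt hwo m τ k).l ∧ (chainSt hwo m τ k).T i = (chainSt hwo m τ k).q x

theorem chain_q_stable_succ (k : ℕ) {x : M} (hx : memQ hwo m τ k x) :
    (chainSt hwo m τ (k + 1)).q x = (chainSt hwo m τ k).q x ∧ memQ hwo m τ (k + 1) x := by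
  obtain ⟨i, hi, hT⟩ := hx
  have hq : (chainSt hwo m τ (k+1)).q x = (chainSt hwo m τ k).q x := by
    show (stepSt hwo m τ k (chainSt hwo m τ k)).q x = _
    rcases stepSt_cases hwo m τ k (chainSt hwo m τ k) with h | ⟨w, h⟩ <;> rw [h]
    rw [addPt_q, ← hT, addE_fix hwo _ w hi]
  refine ⟨hq, i, lt_of_lt_of_le hi (chain_l_le_succ hwo m τ k), ?_⟩
  rw [chain_T_stable_succ hwo m τ k hi, hT, hq]

theorem chain_q_stable {k k' : ℕ} (h : k ≤ k') {x : M} (hx : memQ hwo m τ k x) :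
    (chainSt hwo m τ k').q x = (chainSt hwo m τ k).q x ∧ memQ hwo m τ k' x := by
  induction k' with
  | zero =>
    obtain rfl : k = 0 := Nat.le_zero.mp h
    exact ⟨rfl, hx⟩
  | succ n ih =>
    rcases Nat.lt_or_ge k (n+1) with h' | h'
    · have h'' := Nat.lt_succ_iff.mp h'
      obtain ⟨hq, hmem⟩ := ih h''
      obtain ⟨hq', hmem'⟩ := chain_q_stable_succ hwo m τ n hmem
      exact ⟨by rw [hq', hq], hmem'⟩
    · obtain rfl : k = n + 1 := le_antisymm h h'
      exact ⟨rfl, hx⟩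

/-- Processing the point `m j` puts its `q`-value into the range. -/
theorem chain_T1 {k j : ℕ} (h : τ k = Sum.inl j) : memQ hwo m τ (k + 1) (m j) := by
  have hstep : chainSt hwo m τ (k+1) = addPt hwo (chainSt hwo m τ k)
      ((chainSt hwo m τ k).q (m j)) := stepSt_inl hwo _ h
  refine ⟨(chainSt hwo m τ k).l, ?_, ?_⟩
  · rw [hstep, addPt_l]; exact Nat.lt_succ_self _
  · rw [hstep, addPt_T_self, addPt_q]

/-- Executing a valid back-and-forth task provides the desired extension. -/
theorem chain_BF {k : ℕ} {td : TaskBF} (h : τ k = Sum.inr td)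
    (hc : bfCond (chainSt hwo m τ k) td) :
    ∃ g : M →[L] M,
      (∀ t, g ((chainSt hwo m τ k).T (td.2.1 t)) = (chainSt hwo m τ k).T (td.2.2.1 t)) ∧
      g ((chainSt hwo m τ k).T td.2.2.2) = (chainSt hwo m τ (k + 1)).T (chainSt hwo m τ k).l ∧
      (chainSt hwo m τ k).l < (chainSt hwo m τ (k + 1)).l := by
  set s := chainSt hwo m τ k with hs
  have hstep : chainSt hwo m τ (k+1) = addPt hwo s (hc.2.2.2.choose (s.T td.2.2.2)) :=
    stepSt_inr_pos hwo _ h hc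
  set f₀ := hc.2.2.2.choose with hf₀
  have hf₀spec := hc.2.2.2.choose_spec
  set w := f₀ (s.T td.2.2.2) with hw
  refine ⟨(addE hwo s w).comp f₀, fun t => ?_, ?_, ?_⟩
  · rw [Hom.comp_apply, hf₀spec t]
    exact addE_fix hwo s w (hc.2.1 t)
  · rw [hstep, addPt_T_self, Hom.comp_apply]
  · rw [hstep, addPt_l]; exact Nat.lt_succ_self _

/-- The relation "there is an ambient endomorphism mapping the first tuple onto the second". -/
def RelT (N : L.Substructure M) {r : ℕ} (x y : Fin r → ↥N) : Prop :=
  ∃ f : M →[L] M, ∀ i, f (x i : M) = (y i : M)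

section BnF

variable (N : L.Substructure M)

/-- State for the back-and-forth construction. -/
structure BSt (N : L.Substructure M) where
  r : ℕ
  x : ℕ → ↥N
  y : ℕ → ↥N
  hR : RelT N (fun i : Fin r => x i) (fun i : Fin r => y i)

variable (hforth : ∀ (r : ℕ) (x y : Fin r → ↥N), RelT N x y → ∀ c : ↥N,
    ∃ d, RelT N (Fin.snoc x c) (Fin.snoc y d))
  (hback : ∀ (r : ℕ) (x y : Fin r → ↥N), RelT N x y → ∀ d : ↥N,
    ∃ c, RelT N (Fin.snoc x c) (Fin.snoc y d))

/-- Forth step. -/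
noncomputable def bStepF (s : BSt N) (c : ↥N) : BSt N :=
  ⟨s.r + 1, snocN s.r s.x c,
    snocN s.r s.y ((hforth s.r (fun i : Fin s.r => s.x i) (fun i : Fin s.r => s.y i)
      s.hR c).choose), by
    rw [snocN_fin_eq, snocN_fin_eq]
    exact (hforth s.r (fun i : Fin s.r => s.x i) (fun i : Fin s.r => s.y i) s.hR c).choose_spec⟩

/-- Back step. -/
noncomputable def bStepB (s : BSt N) (d : ↥N) : BSt N :=
  ⟨s.r + 1,
    snocN s.r s.x ((hback s.r (fun i : Fin s.r => s.x i) (fun i : Fin s.r => s.y i)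
      s.hR d).choose), snocN s.r s.y d, by
    rw [snocN_fin_eq, snocN_fin_eq]
    exact (hback s.r (fun i : Fin s.r => s.x i) (fun i : Fin s.r => s.y i) s.hR d).choose_spec⟩

/-- Combined step: make sure `c` appears in the domain and in the codomain list. -/
noncomputable def bStep (s : BSt N) (c : ↥N) : BSt N :=
  bStepB N hback (bStepF N hforth s c) c

theorem bStep_r (s : BSt N) (c : ↥N) : (bStep N hforth hback s c).r = s.r + 2 := rfl

theorem bStep_x_lt (s : BSt N) (c : ↥N) {i : ℕ} (hi : i < s.r) :
    (bStep N hforth hback s c).x i = s.x i := by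
  simp only [bStep, bStepB, bStepF]
  rw [snocN_lt (lt_trans hi (Nat.lt_succ_self _)), snocN_lt hi]

theorem bStep_y_lt (s : BSt N) (c : ↥N) {i : ℕ} (hi : i < s.r) :
    (bStep N hforth hback s c).y i = s.y i := by
  simp only [bStep, bStepB, bStepF]
  rw [snocN_lt (lt_trans hi (Nat.lt_succ_self _)), snocN_lt hi]

theorem bStep_x_mid (s : BSt N) (c : ↥N) : (bStep N hforth hback s c).x s.r = c := by
  simp only [bStep, bStepB, bStepF]
  rw [snocN_lt (Nat.lt_succ_self _), snocN_self]

theorem bStep_y_top (s : BSt N) (c : ↥N) : (bStep N hforth hback s c).y (s.r + 1) = c := by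
  simp only [bStep, bStepB, bStepF]
  rw [snocN_self]

/-- The back-and-forth chain. -/
noncomputable def bSeq (u : ℕ → ↥N) (s0 : BSt N) : ℕ → BSt N
  | 0 => s0
  | k + 1 => bStep N hforth hback (bSeq u s0 k) (u k)

variable (u : ℕ → ↥N) (s0 : BSt N)

theorem bSeq_r_mono {k k' : ℕ} (h : k ≤ k') :
    (bSeq N hforth hback u s0 k).r ≤ (bSeq N hforth hback u s0 k').r := by
  induction k' with
  | zero => simp [Nat.le_zero.mp h]
  | succ n ih =>
    rcases Nat.lt_or_ge k (n + 1) with h' | h'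
    · refine le_trans (ih (Nat.lt_succ_iff.mp h')) ?_
      rw [show bSeq N hforth hback u s0 (n+1) = bStep N hforth hback (bSeq N hforth hback u s0 n)
        (u n) from rfl, bStep_r]
      omega
    · obtain rfl : k = n + 1 := le_antisymm h h'
      exact le_rfl

theorem bSeq_x_stable {k k' : ℕ} (h : k ≤ k') {i : ℕ} (hi : i < (bSeq N hforth hback u s0 k).r) :
    (bSeq N hforth hback u s0 k').x i = (bSeq N hforth hback u s0 k).x i := by
  induction k' with
  | zero => rw [Nat.le_zero.mp h]
  | succ n ih =>
    rcases Nat.lt_or_ge k (n + 1) with h' | h'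
    · have h'' := Nat.lt_succ_iff.mp h'
      rw [show bSeq N hforth hback u s0 (n+1) = bStep N hforth hback (bSeq N hforth hback u s0 n)
        (u n) from rfl, bStep_x_lt N hforth hback _ _
          (lt_of_lt_of_le hi (bSeq_r_mono N hforth hback u s0 h''))]
      exact ih h''
    · obtain rfl : k = n + 1 := le_antisymm h h'
      rfl

theorem bSeq_y_stable {k k' : ℕ} (h : k ≤ k') {i : ℕ} (hi : i < (bSeq N hforth hback u s0 k).r) :
    (bSeq N hforth hback u s0 k').y i = (bSeq N hforth hback u s0 k).y i := by
  induction k' with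
  | zero => rw [Nat.le_zero.mp h]
  | succ n ih =>
    rcases Nat.lt_or_ge k (n + 1) with h' | h'
    · have h'' := Nat.lt_succ_iff.mp h'
      rw [show bSeq N hforth hback u s0 (n+1) = bStep N hforth hback (bSeq N hforth hback u s0 n)
        (u n) from rfl, bStep_y_lt N hforth hback _ _
          (lt_of_lt_of_le hi (bSeq_r_mono N hforth hback u s0 h''))]
      exact ih h''
    · obtain rfl : k = n + 1 := le_antisymm h h'
      rfl

/-- Coherence: equal domain entries have equal codomain entries. -/
theorem bSeq_coh {k i k' i' : ℕ} (hi : i < (bSeq N hforth hback u s0 k).r)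
    (hi' : i' < (bSeq N hforth hback u s0 k').r)
    (hxx : (bSeq N hforth hback u s0 k).x i = (bSeq N hforth hback u s0 k').x i') :
    (bSeq N hforth hback u s0 k).y i = (bSeq N hforth hback u s0 k').y i' := by
  set K := max k k' with hK
  have h1 : k ≤ K := le_max_left _ _
  have h2 : k' ≤ K := le_max_right _ _
  have hiK : i < (bSeq N hforth hback u s0 K).r :=
    lt_of_lt_of_le hi (bSeq_r_mono N hforth hback u s0 h1)
  have hi'K : i' < (bSeq N hforth hback u s0 K).r :=
    lt_of_lt_of_le hi' (bSeq_r_mono N hforth hback u s0 h2)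
  obtain ⟨f, hf⟩ := (bSeq N hforth hback u s0 K).hR
  have e1 : (bSeq N hforth hback u s0 K).x i = (bSeq N hforth hback u s0 K).x i' := by
    rw [bSeq_x_stable N hforth hback u s0 h1 hi, bSeq_x_stable N hforth hback u s0 h2 hi', hxx]
  have e2 : (bSeq N hforth hback u s0 K).y i = (bSeq N hforth hback u s0 K).y i' := by
    have t1 := hf ⟨i, hiK⟩
    have t2 := hf ⟨i', hi'K⟩
    apply Subtype.ext
    simp only at t1 t2
    rw [← t1, ← t2, e1]
  rw [← bSeq_y_stable N hforth hback u s0 h1 hi, ← bSeq_y_stable N hforth hback u s0 h2 hi', e2]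

end BnF

/-- The back-and-forth theorem: a relation with the extension properties is contained in
an automorphism. -/
theorem bnf_exists [L.IsRelational] (N : L.Substructure M) [Countable ↥N]
    (hforth : ∀ (r : ℕ) (x y : Fin r → ↥N), RelT N x y → ∀ c : ↥N,
      ∃ d, RelT N (Fin.snoc x c) (Fin.snoc y d))
    (hback : ∀ (r : ℕ) (x y : Fin r → ↥N), RelT N x y → ∀ d : ↥N,
      ∃ c, RelT N (Fin.snoc x c) (Fin.snoc y d))
    (hsymm : ∀ (r : ℕ) (x y : Fin r → ↥N), RelT N x y → RelT N y x)
    {n : ℕ} {b a : Fin n → ↥N} (hba : RelT N b a) (hne : Nonempty ↥N) :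
    ∃ g : ↥N ≃[L] ↥N, ∀ i, g (b i) = a i := by
  classical
  obtain ⟨u, hu⟩ := exists_surjective_nat ↥N
  set bx : ℕ → ↥N := fun i => if h : i < n then b ⟨i, h⟩ else Classical.choice hne with hbxd
  set ay : ℕ → ↥N := fun i => if h : i < n then a ⟨i, h⟩ else Classical.choice hne with hayd
  have hbx : (fun i : Fin n => bx i) = b := funext fun i => dif_pos i.isLt
  have hay : (fun i : Fin n => ay i) = a := funext fun i => dif_pos i.isLt
  have hR0 : RelT N (fun i : Fin n => bx i) (fun i : Fin n => ay i) := by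
    rw [hbx, hay]; exact hba
  set s0 : BSt N := ⟨n, bx, ay, hR0⟩ with hs0
  set S : ℕ → BSt N := bSeq N hforth hback u s0 with hSd
  have hSsucc : ∀ t, S (t + 1) = bStep N hforth hback (S t) (u t) := fun t => rfl
  have hcovX : ∀ z : ↥N, ∃ ki : ℕ × ℕ, ki.2 < (S ki.1).r ∧ (S ki.1).x ki.2 = z := by
    intro z
    obtain ⟨t, rfl⟩ := hu z
    refine ⟨(t + 1, (S t).r), ?_, ?_⟩
    · show (S t).r < (S (t + 1)).r
      rw [hSsucc t, bStep_r]; omega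
    · show (S (t + 1)).x (S t).r = u t
      rw [hSsucc t]; exact bStep_x_mid N hforth hback (S t) (u t)
  have hcovY : ∀ z : ↥N, ∃ ki : ℕ × ℕ, ki.2 < (S ki.1).r ∧ (S ki.1).y ki.2 = z := by
    intro z
    obtain ⟨t, rfl⟩ := hu z
    refine ⟨(t + 1, (S t).r + 1), ?_, ?_⟩
    · show (S t).r + 1 < (S (t + 1)).r
      rw [hSsucc t, bStep_r]; omega
    · show (S (t + 1)).y ((S t).r + 1) = u t
      rw [hSsucc t]; exact bStep_y_top N hforth hback (S t) (u t)
  set G : ↥N → ↥N := fun z => (S (hcovX z).choose.1).y (hcovX z).choose.2 with hGd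
  have hG : ∀ (k i : ℕ), i < (S k).r → ∀ z, (S k).x i = z → G z = (S k).y i := by
    intro k i hi z hz
    exact bSeq_coh N hforth hback u s0 (hcovX z).choose_spec.1 hi
      ((hcovX z).choose_spec.2.trans hz.symm)
  have hcoh' : ∀ {k i k' i' : ℕ}, i < (S k).r → i' < (S k').r →
      (S k).y i = (S k').y i' → (S k).x i = (S k').x i' := by
    intro k i k' i' hi hi' hyy
    have h1 : k ≤ max k k' := le_max_left _ _
    have h2 : k' ≤ max k k' := le_max_right _ _
    have hiK : i < (S (max k k')).r := lt_of_lt_of_le hi (bSeq_r_mono N hforth hback u s0 h1)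
    have hi'K : i' < (S (max k k')).r := lt_of_lt_of_le hi' (bSeq_r_mono N hforth hback u s0 h2)
    obtain ⟨f', hf'⟩ := hsymm _ _ _ (S (max k k')).hR
    have e2 : (S (max k k')).y i = (S (max k k')).y i' := by
      rw [bSeq_y_stable N hforth hback u s0 h1 hi, bSeq_y_stable N hforth hback u s0 h2 hi', hyy]
    have e1 : (S (max k k')).x i = (S (max k k')).x i' := by
      have t1 := hf' ⟨i, hiK⟩
      have t2 := hf' ⟨i', hi'K⟩
      apply Subtype.ext
      simp only at t1 t2
      rw [← t1, ← t2, e2]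
    rw [← bSeq_x_stable N hforth hback u s0 h1 hi, ← bSeq_x_stable N hforth hback u s0 h2 hi', e1]
  have hGinj : Function.Injective G := by
    intro z z' hzz
    obtain ⟨hk, hx⟩ := (hcovX z).choose_spec
    obtain ⟨hk', hx'⟩ := (hcovX z').choose_spec
    rw [← hx, ← hx']
    exact hcoh' hk hk' hzz
  have hGsurj : Function.Surjective G := by
    intro w
    obtain ⟨⟨k, i⟩, hk, hy⟩ := hcovY w
    exact ⟨(S k).x i, (hG k i hk _ rfl).trans hy⟩
  have key : ∀ (s : ℕ) (R : L.Relations s) (v : Fin s → ↥N),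
      RelMap R (fun i => G (v i)) ↔ RelMap R v := by
    intro s R v
    have hsel : ∀ i : Fin s, ∃ ki : ℕ × ℕ, ki.2 < (S ki.1).r ∧ (S ki.1).x ki.2 = v i :=
      fun i => hcovX (v i)
    choose ki hki hxi using hsel
    set K : ℕ := Finset.univ.sup (fun i => (ki i).1) with hKd
    have hleK : ∀ i, (ki i).1 ≤ K := fun i =>
      Finset.le_sup (f := fun i => (ki i).1) (Finset.mem_univ i)
    have hiK : ∀ i, (ki i).2 < (S K).r := fun i =>
      lt_of_lt_of_le (hki i) (bSeq_r_mono N hforth hback u s0 (hleK i))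
    have hxK : ∀ i, (S K).x (ki i).2 = v i := fun i =>
      (bSeq_x_stable N hforth hback u s0 (hleK i) (hki i)).trans (hxi i)
    have hyK : ∀ i, (S K).y (ki i).2 = G (v i) := fun i =>
      ((hG K (ki i).2 (hiK i) (v i) (hxK i))).symm
    obtain ⟨f, hf⟩ := (S K).hR
    obtain ⟨f', hf'⟩ := hsymm _ _ _ (S K).hR
    have hfv : ∀ i, f ((v i : M)) = ((G (v i) : M)) := by
      intro i
      rw [← hyK i, ← hxK i]
      simpa using hf ⟨(ki i).2, hiK i⟩
    have hf'v : ∀ i, f' ((G (v i) : M)) = ((v i : M)) := by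
      intro i
      rw [← hyK i, ← hxK i]
      simpa using hf' ⟨(ki i).2, hiK i⟩
    constructor
    · intro h
      have h' : RelMap R (fun i => ((G (v i)) : M)) := h
      have h'' := f'.map_rel R _ h'
      have heq : (⇑f' ∘ fun i => ((G (v i)) : M)) = fun i => ((v i : M)) :=
        funext fun i => hf'v i
      rw [heq] at h''
      exact h''
    · intro h
      have h' : RelMap R (fun i => ((v i) : M)) := h
      have h'' := f.map_rel R _ h'
      have heq : (⇑f ∘ fun i => ((v i) : M)) = fun i => ((G (v i)) : M) :=
        funext fun i => hfv i
      rw [heq] at h''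
      exact h''
  refine ⟨⟨Equiv.ofBijective G ⟨hGinj, hGsurj⟩, ?_, ?_⟩, ?_⟩
  · intro n' f x
    exact isEmptyElim f
  · intro n' R x
    exact key n' R x
  · intro i
    show G (b i) = a i
    have h0 : (i : ℕ) < (S 0).r := i.isLt
    have hx0 : (S 0).x i = b i := dif_pos i.isLt
    rw [hG 0 i h0 (b i) hx0]
    show ay i = a i
    exact dif_pos i.isLt

/-- Main auxiliary theorem: a countable nonempty weakly oligomorphic structure retracts
onto an oligomorphic substructure. -/
theorem master {L : FirstOrder.Language.{u, v}} [L.IsRelational] {M : Type w'} [L.Structure M]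
    [Countable M] [Nonempty M] (hwo : WeaklyOligomorphic L M) :
    ∃ N : L.Substructure M, Nonempty (M →[L] ↥N) ∧ Oligomorphic L ↥N := by
  classical
  obtain ⟨m, hm⟩ := exists_surjective_nat M
  have : Nonempty (Task) := ⟨Sum.inl 0⟩
  obtain ⟨τ0, hτ0⟩ := exists_surjective_nat (Task)
  set τ : ℕ → Task := fun k => τ0 (Nat.unpair k).2 with hτd
  have hτ : ∀ (t : Task) (K : ℕ), ∃ k, K ≤ k ∧ τ k = t := by
    intro t K
    obtain ⟨k₀, hk₀⟩ := hτ0 t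
    refine ⟨Nat.pair K k₀, Nat.left_le_pair K k₀, ?_⟩
    simp only [hτd, Nat.unpair_pair]
    exact hk₀
  set C : ℕ → StM L M := chainSt hwo m τ with hCd
  set Fc : Set M := {z | ∃ k, memT hwo m τ k z} with hFcd
  set N : L.Substructure M := ⟨Fc, fun {n} f => isEmptyElim f⟩ with hNd
  have hmemN : ∀ x : M, x ∈ N ↔ ∃ k, memT hwo m τ k x := fun x => Iff.rfl
  -- a common stage for finitely many elements of Fc
  have hFdir : ∀ (r : ℕ) (v : Fin r → M), (∀ i, v i ∈ Fc) →
      ∃ K, ∀ i, ∃ j, j < (C K).l ∧ (C K).T j = v i := by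
    intro r v hv
    choose k hk using hv
    refine ⟨Finset.univ.sup k, fun i => ?_⟩
    exact memT_mono hwo m τ (Finset.le_sup (Finset.mem_univ i)) (hk i)
  -- all tuples from Fc are minimal
  have hFmin : ∀ (r : ℕ) (v : Fin r → M), (∀ i, v i ∈ Fc) → MinT L v := by
    intro r v hv
    obtain ⟨K, hK⟩ := hFdir r v hv
    choose j hj hTj using hK
    have hveq : v = fun i => (C K).T (j i) := funext fun i => (hTj i).symm
    rw [hveq]
    exact (C K).hmin.comp_right fun i : Fin r => (⟨j i, hj i⟩ : Fin (C K).l)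
  -- the retraction p : M → Fc
  have hproc : ∀ x : M, ∃ k, memQ hwo m τ k x := by
    intro x
    obtain ⟨j, rfl⟩ := hm x
    obtain ⟨k, _, hk⟩ := hτ (Sum.inl j) 0
    exact ⟨k + 1, chain_T1 hwo m τ hk⟩
  choose px hpx using hproc
  have hstab : ∀ (x : M) (k : ℕ), px x ≤ k →
      (C k).q x = (C (px x)).q x ∧ memQ hwo m τ k x :=
    fun x k hk => chain_q_stable hwo m τ hk (hpx x)
  set p : M → M := fun x => (C (px x)).q x with hpd
  have hpF : ∀ x, p x ∈ Fc := by
    intro x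
    obtain ⟨i, hi, hT⟩ := hpx x
    exact ⟨px x, i, hi, hT⟩
  have hphom : ∀ (r : ℕ) (R : L.Relations r) (v : Fin r → M),
      RelMap R v → RelMap R fun i => p (v i) := by
    intro r R v h
    set K := Finset.univ.sup (fun i => px (v i)) with hKd
    have hag : ∀ i, (C K).q (v i) = p (v i) := fun i =>
      (hstab (v i) K (Finset.le_sup (f := fun i => px (v i)) (Finset.mem_univ i))).1
    have h'' := ((C K).q).map_rel R v h
    have heq : (⇑(C K).q ∘ v) = fun i => p (v i) := funext fun i => hag i
    rw [heq] at h''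
    exact h''
  have hNne : Nonempty ↥N := ⟨⟨p (Classical.arbitrary M), hpF _⟩⟩
  -- the symmetry property
  have hsymm : ∀ (r : ℕ) (x y : Fin r → ↥N), RelT N x y → RelT N y x := by
    rintro r x y ⟨f, hf⟩
    have hminx : MinT L fun i => ((x i) : M) := hFmin r _ fun i => (x i).2
    obtain ⟨h, hh⟩ := hminx f
    refine ⟨h, fun i => ?_⟩
    rw [← hf i]
    exact hh i
  -- the forth property
  have hforth : ∀ (r : ℕ) (x y : Fin r → ↥N), RelT N x y → ∀ c : ↥N,
      ∃ d, RelT N (Fin.snoc x c) (Fin.snoc y d) := by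
    rintro r x y ⟨f, hf⟩ c
    choose kx hkx using fun i => ((x i).2 : ∃ k, memT hwo m τ k ((x i : M)))
    choose ky hky using fun i => ((y i).2 : ∃ k, memT hwo m τ k ((y i : M)))
    obtain ⟨kc, hkc⟩ := (c.2 : ∃ k, memT hwo m τ k (c : M))
    set K₀ : ℕ := max (max (Finset.univ.sup kx) (Finset.univ.sup ky)) kc with hK₀d
    have hxK : ∀ i, memT hwo m τ K₀ ((x i : M)) := fun i =>
      memT_mono hwo m τ
        (le_trans (Finset.le_sup (Finset.mem_univ i))
          (le_trans (le_max_left _ _) (le_max_left _ _))) (hkx i)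
    have hyK : ∀ i, memT hwo m τ K₀ ((y i : M)) := fun i =>
      memT_mono hwo m τ
        (le_trans (Finset.le_sup (Finset.mem_univ i))
          (le_trans (le_max_right _ _) (le_max_left _ _))) (hky i)
    have hcK : memT hwo m τ K₀ (c : M) := memT_mono hwo m τ (le_max_right _ _) hkc
    choose ii hii hTii using hxK
    choose jj hjj hTjj using hyK
    obtain ⟨ci, hci, hTci⟩ := hcK
    obtain ⟨K, hKK, hτK⟩ := hτ (Sum.inr ⟨r, ii, jj, ci⟩) K₀
    have hbc : bfCond (C K) ⟨r, ii, jj, ci⟩ := by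
      refine ⟨fun t => lt_of_lt_of_le (hii t) (chain_l_mono hwo m τ hKK),
        fun t => lt_of_lt_of_le (hjj t) (chain_l_mono hwo m τ hKK),
        lt_of_lt_of_le hci (chain_l_mono hwo m τ hKK), f, fun t => ?_⟩
      show f ((C K).T (ii t)) = (C K).T (jj t)
      rw [chain_T_stable hwo m τ hKK (hii t), chain_T_stable hwo m τ hKK (hjj t),
        hTii, hTjj]
      exact hf t
    obtain ⟨g, hg1, hg2, hg3⟩ := chain_BF hwo m τ hτK hbc
    have hdF : (C (K + 1)).T (C K).l ∈ Fc := ⟨K + 1, (C K).l, hg3, rfl⟩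
    refine ⟨⟨_, hdF⟩, g, fun i => ?_⟩
    refine Fin.lastCases ?_ (fun t => ?_) i
    · rw [Fin.snoc_last, Fin.snoc_last]
      have hceq : ((c : M)) = (C K).T ci := by
        rw [chain_T_stable hwo m τ hKK hci, hTci]
      rw [hceq]
      exact hg2
    · rw [Fin.snoc_castSucc, Fin.snoc_castSucc]
      have hx' : ((x t : M)) = (C K).T (ii t) := by
        rw [chain_T_stable hwo m τ hKK (hii t), hTii]
      have hy' : ((y t : M)) = (C K).T (jj t) := by
        rw [chain_T_stable hwo m τ hKK (hjj t), hTjj]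
      rw [hx', hy']
      exact hg1 t
  have hback : ∀ (r : ℕ) (x y : Fin r → ↥N), RelT N x y → ∀ d : ↥N,
      ∃ c, RelT N (Fin.snoc x c) (Fin.snoc y d) := by
    intro r x y hR d
    obtain ⟨c, hc⟩ := hforth r y x (hsymm r x y hR) d
    exact ⟨c, hsymm _ _ _ hc⟩
  refine ⟨N, ⟨⟨fun x => ⟨p x, hpF x⟩, fun {n} f => isEmptyElim f, ?_⟩⟩, ?_⟩
  · intro n R v h
    exact hphom n R v h
  -- oligomorphy
  intro nn
  set cls : (Fin nn → ↥N) → Set (Fin nn → M) :=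
    fun a => orbCl (L := L) fun i => ((a i) : M) with hclsd
  have hclsfin : (Set.range cls).Finite := by
    refine (orbCl_finite hwo nn).subset ?_
    rintro _ ⟨a, rfl⟩
    exact ⟨_, rfl⟩
  set pick : Set (Fin nn → M) → (Fin nn → ↥N) := fun s =>
    if h : ∃ a, cls a = s then h.choose else fun _ => Classical.choice hNne with hpickd
  refine ⟨pick '' Set.range cls, hclsfin.image pick, ?_⟩
  intro a
  refine ⟨pick (cls a), Set.mem_image_of_mem pick ⟨a, rfl⟩, ?_⟩
  have hex : ∃ b, cls b = cls a := ⟨a, rfl⟩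
  have hpa : cls (pick (cls a)) = cls a := by
    simp only [hpickd, dif_pos hex]
    exact hex.choose_spec
  have hRel : RelT N (pick (cls a)) a := by
    have hmem : (fun i => ((a i) : M)) ∈ cls (pick (cls a)) := by
      rw [hpa]
      exact self_mem_orbCl _
    obtain ⟨f, hf⟩ := hmem
    exact ⟨f, hf⟩
  obtain ⟨g, hg⟩ := bnf_exists N hforth hback hsymm hRel hNne
  exact ⟨g, funext hg⟩

end Stmt17Aux

/-- Every countable weakly oligomorphic relational structure `M` is
homomorphism-equivalent to an oligomorphic structure `F` that embeds into `M`. -/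
theorem stmt17 (L : FirstOrder.Language.{u, v}) [L.IsRelational]
    (M : Type w') [L.Structure M] [Countable M]
    (hwo : WeaklyOligomorphic L M) :
    ∃ F : Bundled.{w'} L.Structure, Nonempty (F ↪[L] M) ∧ Oligomorphic L F ∧
      Nonempty (M →[L] F) ∧ Nonempty (F →[L] M) := by
  classical
  cases isEmpty_or_nonempty M with
  | inl h =>
    refine ⟨⟨M, inferInstance⟩, ⟨FirstOrder.Language.Embedding.refl L M⟩, ?_, ⟨Hom.id L M⟩, ⟨Hom.id L M⟩⟩
    intro n
    haveI : Finite M := Finite.of_subsingleton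
    exact ⟨Set.univ, Set.finite_univ, fun a => ⟨a, trivial, FirstOrder.Language.Equiv.refl L M, rfl⟩⟩
  | inr h =>
    obtain ⟨N, ⟨f⟩, holig⟩ := Stmt17Aux.master hwo
    exact ⟨⟨↥N, inferInstance⟩, ⟨N.subtype⟩, holig, ⟨f⟩, ⟨N.subtype.toHom⟩⟩
end

section
/- Let A be a countable weakly oligomorphic relational structure. Then any two countable structures over the same language that are elementarily equivalent to A (i.e. are models of the complete first-order theory of A) are homomorphism-equivalent. -/
open FirstOrder FirstOrder.Language FirstOrder.Language.Structure CategoryTheory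

universe u v w w' w'' w'''

namespace Stmt19Aux

variable {L : FirstOrder.Language.{u, v}}

/-- Positive existential formulas with `k` free variables. -/
inductive EP (L : FirstOrder.Language.{u, v}) : ℕ → Type max u v
  | verum {k : ℕ} : EP L k
  | rel {k m : ℕ} (R : L.Relations m) (ts : Fin m → Fin k) : EP L k
  | conj {k : ℕ} (φ ψ : EP L k) : EP L k
  | ex {k : ℕ} (φ : EP L (k + 1)) : EP L k

def EP.Realize {A : Type*} [L.Structure A] : ∀ {k : ℕ}, EP L k → (Fin k → A) → Prop
  | _, .verum, _ => True
  | _, .rel R ts, a => RelMap R (fun i => a (ts i))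
  | _, .conj φ ψ, a => φ.Realize a ∧ ψ.Realize a
  | _, .ex φ, a => ∃ x, φ.Realize (Fin.snoc a x)

lemma EP.realize_hom {A A' : Type*} [L.Structure A] [L.Structure A'] (f : A →[L] A') :
    ∀ {k : ℕ} (φ : EP L k) (a : Fin k → A), φ.Realize a → φ.Realize (f ∘ a)
  | _, .verum, _, _ => trivial
  | _, .rel R ts, a, h => by
      have := f.map_rel R (fun i => a (ts i)) h
      exact this
  | _, .conj φ ψ, a, h => ⟨realize_hom f φ a h.1, realize_hom f ψ a h.2⟩
  | _, .ex φ, a, h => by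
      obtain ⟨x, hx⟩ := h
      refine ⟨f x, ?_⟩
      have := realize_hom f φ _ hx
      rwa [Fin.comp_snoc] at this

def EP.toB : ∀ {k : ℕ}, EP L k → L.BoundedFormula Empty k
  | _, .verum => ⊤
  | _, .rel R ts => R.boundedFormula (fun i => Term.var (Sum.inr (ts i)))
  | _, .conj φ ψ => φ.toB ⊓ ψ.toB
  | _, .ex φ => φ.toB.ex

lemma EP.realize_toB {A : Type*} [L.Structure A] :
    ∀ {k : ℕ} (φ : EP L k) (v : Empty → A) (a : Fin k → A),
      φ.toB.Realize v a ↔ φ.Realize a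
  | _, .verum, v, a => by simp [toB, Realize]
  | _, .rel R ts, v, a => by simp [toB, Realize, BoundedFormula.realize_rel, Term.realize]
  | _, .conj φ ψ, v, a => by
      simp [toB, Realize, BoundedFormula.realize_inf, realize_toB φ v a, realize_toB ψ v a]
  | _, .ex φ, v, a => by
      simp only [toB, Realize, BoundedFormula.realize_ex]
      exact exists_congr fun x => realize_toB φ v _

/-- The set defined by an EP formula. -/
def epSet (A : Type*) [L.Structure A] {k : ℕ} (φ : EP L k) : Set (Fin k → A) :=
  {a | φ.Realize a}

lemma realize_exs_iff {A : Type*} [L.Structure A] {k : ℕ} (φ : EP L k) :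
    A ⊨ (φ.toB.exs) ↔ ∃ a : Fin k → A, φ.Realize a := by
  have : ∀ v : Empty → A, (φ.toB.exs).Realize v ↔ ∃ a : Fin k → A, φ.Realize a := by
    intro v
    rw [BoundedFormula.realize_exs]
    exact exists_congr fun a => EP.realize_toB φ v a
  exact this _

lemma realize_alls_iff {A : Type*} [L.Structure A] {k : ℕ} (φ ψ : EP L k) :
    A ⊨ ((φ.toB.iff ψ.toB).alls) ↔ ∀ a : Fin k → A, (φ.Realize a ↔ ψ.Realize a) := by
  have : ∀ v : Empty → A, ((φ.toB.iff ψ.toB).alls).Realize v ↔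
      ∀ a : Fin k → A, (φ.Realize a ↔ ψ.Realize a) := by
    intro v
    rw [BoundedFormula.realize_alls]
    refine forall_congr' fun a => ?_
    rw [BoundedFormula.realize_iff, EP.realize_toB φ v a, EP.realize_toB ψ v a]
  exact this _

variable {M : Type*} [L.Structure M]

lemma epSet_range_finite (hwo : WeaklyOligomorphic L M) (k : ℕ) :
    (Set.range fun φ : EP L k => epSet M φ).Finite := by
  refine (hwo k).subset ?_
  rintro _ ⟨φ, rfl⟩ f a ha
  exact EP.realize_hom f φ a ha

lemma epSet_range_finite_of_ee {N : Type*} [L.Structure N]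
    (hwo : WeaklyOligomorphic L M) (h : M ≅[L] N) (k : ℕ) :
    (Set.range fun φ : EP L k => epSet N φ).Finite := by
  classical
  have hM := epSet_range_finite hwo k
  have key : ∀ φ ψ : EP L k, epSet M φ = epSet M ψ → epSet N φ = epSet N ψ := by
    intro φ ψ hEq
    have h1 : M ⊨ ((φ.toB.iff ψ.toB).alls) := by
      refine (realize_alls_iff φ ψ).2 fun a => ?_
      constructor
      · intro hx
        have : a ∈ epSet M φ := hx
        rw [hEq] at this; exact this
      · intro hx
        have : a ∈ epSet M ψ := hx
        rw [← hEq] at this; exact this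
    have h2 := (h.realize_sentence _).1 h1
    exact Set.ext fun a => iff_of_eq (congrArg _ rfl) |>.mp ((realize_alls_iff φ ψ).1 h2 a)
  set F : Set (Fin k → M) → Set (Fin k → N) := fun S =>
    if hS : ∃ φ : EP L k, epSet M φ = S then epSet N hS.choose else ∅ with hF
  refine (hM.image F).subset ?_
  rintro _ ⟨φ, rfl⟩
  refine ⟨epSet M φ, ⟨φ, rfl⟩, ?_⟩
  have hS : ∃ ψ : EP L k, epSet M ψ = epSet M φ := ⟨φ, rfl⟩
  simp only [hF, dif_pos hS]
  exact key _ _ hS.choose_spec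

lemma hom_of_ee {M B C : Type*} [L.Structure M] [L.Structure B] [L.Structure C]
    [L.IsRelational] [Countable B]
    (hwo : WeaklyOligomorphic L M)
    (hB : L.ElementarilyEquivalent M B) (hC : L.ElementarilyEquivalent M C) :
    Nonempty (B →[L] C) := by
  classical
  have hBC : L.ElementarilyEquivalent B C := hB.symm.trans hC
  have hexs : ∀ {k : ℕ} (φ : EP L k), (∃ a : Fin k → B, φ.Realize a) →
      (∃ a : Fin k → C, φ.Realize a) := by
    intro k φ hb
    exact (realize_exs_iff φ).1 ((hBC.realize_sentence _).1 ((realize_exs_iff φ).2 hb))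
  cases isEmpty_or_nonempty B with
  | inl hE =>
    refine ⟨⟨fun b => isEmptyElim b, fun {n} f => isEmptyElim f, ?_⟩⟩
    intro n R x hR
    match n, R, x, hR with
    | 0, R, x, hR =>
      have hb : (EP.rel R Fin.elim0 : EP L 0).Realize x := by
        show RelMap R _
        convert hR using 1
      obtain ⟨a, ha⟩ := hexs _ ⟨x, hb⟩
      show RelMap R _
      have ha' : RelMap R (fun i : Fin 0 => a (Fin.elim0 i)) := ha
      convert ha' using 1
    | n+1, R, x, hR => exact isEmptyElim (x 0)
  | inr hNE =>
    obtain ⟨e, he⟩ := exists_surjective_nat B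
    let S : ∀ n : ℕ, Set (Fin n → C) := fun n =>
      {a | ∀ φ : EP L n, φ.Realize (fun i : Fin n => e i) → φ.Realize a}
    have hfinC : ∀ k, (Set.range fun φ : EP L k => epSet C φ).Finite :=
      fun k => epSet_range_finite_of_ee hwo hC k
    have hS0 : ∀ a : Fin 0 → C, a ∈ S 0 := by
      intro a φ hφ
      obtain ⟨a', ha'⟩ := hexs φ ⟨_, hφ⟩
      have : a' = a := funext fun i => Fin.elim0 i
      rwa [this] at ha'
    have hmin : ∀ (n : ℕ) (T : Set (EP L n)), EP.verum ∈ T →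
        (∀ φ ψ, φ ∈ T → ψ ∈ T → EP.conj φ ψ ∈ T) →
        ∃ ψ0 ∈ T, ∀ ψ ∈ T, epSet C ψ0 ⊆ epSet C ψ := by
      intro n T hTv hTconj
      have hV : ((fun ψ : EP L n => epSet C ψ) '' T).Finite :=
        (hfinC n).subset (Set.image_subset_range _ _)
      have aux : ∃ ψ0 ∈ T, ∀ v ∈ (fun ψ : EP L n => epSet C ψ) '' T, epSet C ψ0 ⊆ v := by
        refine Set.Finite.induction_on_subset (motive := fun V _ => ∃ ψ0 ∈ T, ∀ v ∈ V, epSet C ψ0 ⊆ v) _ hV ⟨EP.verum, hTv, fun v hv => absurd hv (by simp)⟩ ?_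
        rintro v V ⟨ψ1, hψ1T, rfl⟩ _ _ ⟨ψ0, hψ0T, hψ0⟩
        refine ⟨EP.conj ψ0 ψ1, hTconj _ _ hψ0T hψ1T, ?_⟩
        rintro w hw
        rcases hw with rfl | hw
        · intro a ha
          exact ha.2
        · intro a ha
          exact hψ0 w hw ha.1
      obtain ⟨ψ0, hψ0T, hψ0⟩ := aux
      exact ⟨ψ0, hψ0T, fun ψ hψ => hψ0 _ ⟨ψ, hψ, rfl⟩⟩
    have ext : ∀ (n : ℕ) (a : Fin n → C), a ∈ S n → ∃ x : C, Fin.snoc a x ∈ S (n+1) := by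
      intro n a ha
      obtain ⟨ψ0, hψ0T, hψ0min⟩ := hmin (n+1)
        {ψ | ψ.Realize (fun i : Fin (n+1) => e i)} trivial (fun φ ψ h1 h2 => ⟨h1, h2⟩)
      have hsnoc : (fun i : Fin (n+1) => e i) = Fin.snoc (fun i : Fin n => e i) (e n) := by
        funext i
        refine Fin.lastCases ?_ ?_ i
        · simp [Fin.snoc_last]
        · intro j
          simp [Fin.snoc_castSucc]
      have hex : (EP.ex ψ0).Realize (fun i : Fin n => e i) :=
        ⟨e n, by rw [← hsnoc]; exact hψ0T⟩
      obtain ⟨x, hx⟩ := ha (EP.ex ψ0) hex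
      exact ⟨x, fun ψ hψ => hψ0min ψ hψ hx⟩
    let ext' : ∀ (n : ℕ), {a : Fin n → C // a ∈ S n} → {a : Fin (n+1) → C // a ∈ S (n+1)} :=
      fun n p => ⟨Fin.snoc p.1 (ext n p.1 p.2).choose, (ext n p.1 p.2).choose_spec⟩
    let d : ∀ n : ℕ, {a : Fin n → C // a ∈ S n} :=
      fun n => Nat.rec ⟨fun i => Fin.elim0 i, hS0 _⟩ ext' n
    have hd : ∀ n, (d (n+1)).1 = Fin.snoc (d n).1 (ext n (d n).1 (d n).2).choose :=
      fun n => rfl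
    let c : ℕ → C := fun n => (d (n+1)).1 (Fin.last n)
    have hc : ∀ n, (fun i : Fin n => c i) = (d n).1 := by
      intro n
      induction n with
      | zero => funext i; exact Fin.elim0 i
      | succ n ih =>
        funext i
        refine Fin.lastCases ?_ ?_ i
        · show c (Fin.last n : Fin (n+1)) = _
          simp only [Fin.val_last]
          rfl
        · intro j
          have h1 : (d (n+1)).1 j.castSucc = (d n).1 j := by
            rw [hd]; exact Fin.snoc_castSucc _ _ _
          calc c (j.castSucc : Fin (n+1)) = c j := by rw [Fin.coe_castSucc]
            _ = (d n).1 j := congrFun ih j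
            _ = (d (n+1)).1 j.castSucc := h1.symm
    have hcS : ∀ n, (fun i : Fin n => c i) ∈ S n := fun n => (hc n) ▸ (d n).2
    let idx : B → ℕ := fun b => (he b).choose
    have hidx : ∀ b, e (idx b) = b := fun b => (he b).choose_spec
    refine ⟨⟨fun b => c (idx b), fun {n} f => isEmptyElim f, ?_⟩⟩
    intro m R x hR
    let N : ℕ := (Finset.univ.sup fun j : Fin m => idx (x j)) + 1
    have hlt : ∀ j : Fin m, idx (x j) < N := fun j =>
      Nat.lt_succ_of_le (Finset.le_sup (f := fun j : Fin m => idx (x j)) (Finset.mem_univ j))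
    have hφB : (EP.rel R (fun j => (⟨idx (x j), hlt j⟩ : Fin N)) : EP L N).Realize
        (fun i : Fin N => e i) := by
      show RelMap R _
      have : (fun j => e ((⟨idx (x j), hlt j⟩ : Fin N) : ℕ)) = x :=
        funext fun j => hidx (x j)
      rw [show (fun j => (fun i : Fin N => e (i : ℕ)) ((⟨idx (x j), hlt j⟩ : Fin N)))
        = x from this]
      exact hR
    exact hcS N _ hφB

end Stmt19Aux

/-- If `M` is a countable weakly oligomorphic structure, then any two countable
structures over the same language that are elementarily equivalent to `M` are
homomorphism-equivalent. -/
theorem stmt19 (L : FirstOrder.Language.{u, v}) [L.IsRelational]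
    (M : Type w') [L.Structure M] [Countable M]
    (hwo : WeaklyOligomorphic L M)
    (B : Type w'') (C : Type w''') [L.Structure B] [L.Structure C]
    [Countable B] [Countable C]
    (hB : L.ElementarilyEquivalent M B) (hC : L.ElementarilyEquivalent M C) :
    Nonempty (B →[L] C) ∧ Nonempty (C →[L] B) :=
  ⟨Stmt19Aux.hom_of_ee hwo hB hC, Stmt19Aux.hom_of_ee hwo hC hB⟩
end
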